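/- arXiv:1404.5350 — 3 statements merged into one kernel-verified Lean document; each statement's English description precedes it below -/
import Mathlib

section
/- Let A be an m×n real matrix with b ∈ ℝᵐ and λ > 0, and consider the LASSO problem min_{x∈ℝⁿ} F(x) = (1/2)‖Ax − b‖² + λ‖x‖₁. Then the local error bound holds: for every ν ≥ inf F there exist δ > 0 and τ > 0 such that dist(x, closure(X*)) ≤ τ·‖x − prox_{λ‖·‖₁}(x − Aᵀ(Ax − b))‖ for all x ∈ ℝⁿ with F(x) ≤ ν and ‖x − prox_{λ‖·‖₁}(x − Aᵀ(Ax − b))‖ ≤ δ, where X* is the set of minimizers of F. -/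
/-!
Fix a minimizer `x̄` of `F` (it exists because `F` is coercive) and put `g = Aᵀ(A x̄ - b)`.
First-order optimality gives `|gᵢ| ≤ λ` and
`F x - F x̄ = ½‖A x - A x̄‖² + ∑ᵢ (λ|xᵢ| + gᵢ xᵢ)` with nonnegative summands, so `X*` is the
polyhedron `{x | A x = A x̄, λ|xᵢ| + gᵢ xᵢ = 0 for all i}`. A compactness argument on the unit
sphere gives the Hoffman-type bound `dist(x, X*) ≤ κ (‖A x - A x̄‖ + ∑ᵢ (λ|xᵢ| + gᵢ xᵢ))`, hence
quadratic growth `μ dist(x, X*)² ≤ F x - F*` on bounded sets. On the other hand, the optimality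
condition of the proximal step together with convexity of the smooth part gives
`F(p x) - F* ≤ C ‖x - p x‖ dist(p x, X*)`. Comparing the two at `p x`, which stays bounded on the
sublevel set, yields `dist(p x, X*) ≤ (C / μ) ‖x - p x‖`.
-/

open Set Finset Matrix

/-- `p` is the proximal point `prox_φ(x)` over `ℝⁿ`: the minimizer over `y` of
`φ(y) + (1/2)‖y − x‖²`. -/
def IsProx {E : Type*} [NormedAddCommGroup E] [InnerProductSpace ℝ E]
    (φ : E → ℝ) (x p : E) : Prop :=
  ∀ y, φ p + (1 / 2) * ‖p - x‖ ^ 2 ≤ φ y + (1 / 2) * ‖y - x‖ ^ 2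

open Filter Metric Topology
open scoped RealInnerProductSpace

theorem nonneg_of_forall_Ioc_nonneg_add_mul {a b : ℝ} (h : ∀ t ∈ Ioc (0 : ℝ) 1, 0 ≤ a + t * b) :
    0 ≤ a := by
  have hlim : Tendsto (fun t : ℝ => a + t * b) (𝓝[>] 0) (𝓝 a) :=
    ((by fun_prop : Continuous fun t : ℝ => a + t * b).tendsto' 0 a (by simp)).mono_left
      nhdsWithin_le_nhds
  exact ge_of_tendsto hlim (eventually_of_mem (Ioc_mem_nhdsGT one_pos) h)

theorem ConvexOn.neg_inner_le_of_forall_le_add_sq {E F : Type*} [AddCommGroup E] [Module ℝ E]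
    [NormedAddCommGroup F] [InnerProductSpace ℝ F] {ψ : E → ℝ} (hψ : ConvexOn ℝ univ ψ)
    (T : E →ₗ[ℝ] F) (c : F) {x : E}
    (hx : ∀ y, ψ x + 1 / 2 * ‖T x - c‖ ^ 2 ≤ ψ y + 1 / 2 * ‖T y - c‖ ^ 2) (y : E) :
    -⟪T x - c, T (y - x)⟫ ≤ ψ y - ψ x := by
  have hsmall : ∀ t ∈ Ioc (0 : ℝ) 1,
      0 ≤ (ψ y - ψ x + ⟪T x - c, T (y - x)⟫) + t * (1 / 2 * ‖T (y - x)‖ ^ 2) := by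
    rintro t ⟨ht0, ht1⟩
    have hconv := hψ.2 (mem_univ x) (mem_univ y) (sub_nonneg.2 ht1) ht0.le (sub_add_cancel 1 t)
    have hmin := hx ((1 - t) • x + t • y)
    have hsplit : T ((1 - t) • x + t • y) - c = (T x - c) + t • T (y - x) := by
      simp only [map_add, map_smul, map_sub]; module
    rw [hsplit, norm_add_sq_real, inner_smul_right, norm_smul, Real.norm_of_nonneg ht0.le] at hmin
    simp only [smul_eq_mul] at hconv
    refine nonneg_of_mul_nonneg_right ?_ ht0
    linarith
  linarith [nonneg_of_forall_Ioc_nonneg_add_mul hsmall]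

theorem ConvexOn.isProx_sub_le_inner {E F : Type*} [NormedAddCommGroup E] [InnerProductSpace ℝ E]
    [NormedAddCommGroup F] [InnerProductSpace ℝ F] {ψ : E → ℝ} (hψ : ConvexOn ℝ univ ψ)
    {T : E →ₗ[ℝ] F} {T' : F →ₗ[ℝ] E} (hT' : ∀ u v, ⟪T' u, v⟫ = ⟪u, T v⟫) (b : F) {x p : E}
    (hp : IsProx ψ (x - T' (T x - b)) p) (z : E) :
    (1 / 2 * ‖T p - b‖ ^ 2 + ψ p) - (1 / 2 * ‖T z - b‖ ^ 2 + ψ z) ≤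
      ⟪(x - p) - T' (T (x - p)), p - z⟫ := by
  have hψz := hψ.neg_inner_le_of_forall_le_add_sq LinearMap.id _ hp z
  simp only [LinearMap.id_apply] at hψz
  have hsplit : T z - b = (T p - b) + T (z - p) := by rw [map_sub]; abel
  have hquad := norm_add_sq_real (T p - b) (T (z - p))
  rw [← hsplit, ← hT'] at hquad
  have hlin : (x - p) - T' (T (x - p)) = ((x - T' (T x - b)) - p) + T' (T p - b) := by
    simp only [map_sub]; abel
  have hflip : ⟪(x - T' (T x - b)) - p, p - z⟫ = ⟪p - (x - T' (T x - b)), z - p⟫ := by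
    rw [← inner_neg_neg, neg_sub, neg_sub]
  rw [hlin, inner_add_left, hflip, ← neg_sub z p, inner_neg_right]
  nlinarith [sq_nonneg ‖T (z - p)‖]

theorem infDist_le_of_sq_infDist_le {α : Type*} [PseudoMetricSpace α] [ProperSpace α]
    {X : Set α} (hX : IsClosed X) (hne : X.Nonempty) {μ C : ℝ} (hμ : 0 < μ) (hC : 0 ≤ C)
    {x p : α} (h : ∀ z ∈ X, μ * infDist p X ^ 2 ≤ C * dist x p * dist p z) :
    infDist x X ≤ (1 + C / μ) * dist x p := by
  obtain ⟨z, hz, hpz⟩ := hX.exists_infDist_eq_dist hne p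
  have hd : infDist p X ≤ C / μ * dist x p := by
    rcases (infDist_nonneg (x := p) (s := X)).eq_or_lt with h0 | h0
    · rw [← h0]; positivity
    · have := h z hz
      rw [← hpz, sq, ← mul_assoc] at this
      rw [div_mul_eq_mul_div, le_div_iff₀ hμ]
      nlinarith [le_of_mul_le_mul_right this h0]
  calc infDist x X ≤ infDist p X + dist x p := infDist_le_infDist_add_dist
    _ ≤ (1 + C / μ) * dist x p := by linarith

theorem isClosed_setOf_forall_le {X : Type*} [TopologicalSpace X] {f : X → ℝ} (hf : Continuous f) :
    IsClosed {y | ∀ z, f y ≤ f z} := by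
  rw [ofPred_forall]
  exact isClosed_iInter fun z => isClosed_le hf continuous_const

section

variable {lam c : ℝ}

theorem mul_abs_add_mul_nonneg (hc : |c| ≤ lam) (v : ℝ) : 0 ≤ lam * |v| + c * v := by
  nlinarith [neg_abs_le (c * v), abs_mul c v, mul_le_mul_of_nonneg_right hc (abs_nonneg v)]

theorem sub_abs_mul_abs_le_mul_abs_add_mul (lam c v : ℝ) :
    (lam - |c|) * |v| ≤ lam * |v| + c * v := by
  nlinarith [neg_abs_le (c * v), abs_mul c v]

theorem mul_abs_add_neg_mul_eq_zero_iff (hlam : 0 < lam) (v : ℝ) :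
    lam * |v| + -lam * v = 0 ↔ 0 ≤ v := by
  constructor
  · intro h
    by_contra hv
    rw [abs_of_neg (not_le.1 hv)] at h
    nlinarith [not_le.1 hv]
  · intro hv
    rw [abs_of_nonneg hv]
    ring

theorem mul_abs_add_mul_eq_zero_iff (hlam : 0 < lam) (v : ℝ) :
    lam * |v| + lam * v = 0 ↔ v ≤ 0 := by
  simpa [abs_neg] using mul_abs_add_neg_mul_eq_zero_iff hlam (-v)

variable {α : Type*} {l : Filter α} {u d s η : α → ℝ} {t : ℝ}

theorem eventually_nonneg_add_div_three_mul (hu : ∀ k, 0 ≤ u k) (hd : ∀ k, 0 < d k)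
    (hs : Tendsto s l (𝓝 t)) (hη : Tendsto η l (𝓝 0))
    (hx : ∀ k, -(η k * d k) ≤ u k + d k * s k) : ∀ᶠ k in l, 0 ≤ u k + d k / 3 * t := by
  rcases le_or_gt 0 t with ht | ht
  · exact .of_forall fun k => add_nonneg (hu k) (by have := hd k; positivity)
  · filter_upwards [(hs.add hη).eventually_lt_const (by linarith : t + 0 < t / 3)] with k hk
    nlinarith [hx k, hd k, hu k]

theorem eventually_mul_abs_add_mul_eq_zero (hlam : 0 < lam) (hc : |c| ≤ lam)
    (hu : ∀ k, lam * |u k| + c * u k = 0) (hd : ∀ k, 0 < d k)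
    (hs : Tendsto s l (𝓝 t)) (hη : Tendsto η l (𝓝 0))
    (hx : ∀ k, lam * |u k + d k * s k| + c * (u k + d k * s k) ≤ η k * d k) :
    ∀ᶠ k in l, lam * |u k + d k / 3 * t| + c * (u k + d k / 3 * t) = 0 := by
  have hη' : Tendsto (fun k => η k / (2 * lam)) l (𝓝 0) := by simpa using hη.div_const (2 * lam)
  obtain ⟨hc₁, hc₂⟩ := abs_le.1 hc
  rcases hc₁.eq_or_lt with rfl | hc₁
  · refine (eventually_nonneg_add_div_three_mul
      (fun k => (mul_abs_add_neg_mul_eq_zero_iff hlam _).1 (hu k)) hd hs hη' fun k => ?_).mono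
      fun k hk => (mul_abs_add_neg_mul_eq_zero_iff hlam _).2 hk
    rw [div_mul_eq_mul_div, neg_le, le_div_iff₀ (by positivity)]
    nlinarith [hx k, neg_abs_le (u k + d k * s k)]
  rcases hc₂.eq_or_lt with hc | hc₂
  · subst c
    refine (eventually_nonneg_add_div_three_mul (u := fun k => -u k) (s := fun k => -s k)
      (fun k => neg_nonneg.2 ((mul_abs_add_mul_eq_zero_iff hlam _).1 (hu k))) hd hs.neg hη'
      fun k => ?_).mono fun k hk => (mul_abs_add_mul_eq_zero_iff hlam _).2 (by linarith)
    rw [div_mul_eq_mul_div, neg_le, le_div_iff₀ (by positivity)]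
    nlinarith [hx k, le_abs_self (u k + d k * s k)]
  have hgap : 0 < lam - |c| := by rw [sub_pos, abs_lt]; exact ⟨hc₁, hc₂⟩
  have hu0 : ∀ k, u k = 0 := fun k => by
    have := sub_abs_mul_abs_le_mul_abs_add_mul lam c (u k)
    rw [hu k] at this
    exact abs_eq_zero.1 (le_antisymm (nonpos_of_mul_nonpos_right this hgap) (abs_nonneg _))
  have hst : ∀ k, |s k| ≤ η k / (lam - |c|) := fun k => by
    have := (sub_abs_mul_abs_le_mul_abs_add_mul lam c (d k * s k)).trans
      (by simpa [hu0 k] using hx k)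
    rw [abs_mul, abs_of_pos (hd k)] at this
    rw [le_div_iff₀ hgap]
    nlinarith [hd k]
  rcases l.eq_or_neBot with rfl | _
  · exact eventually_bot
  have ht : t = 0 := by
    have := le_of_tendsto_of_tendsto' hs.abs (hη.div_const _) hst
    rw [zero_div] at this
    exact abs_eq_zero.1 (le_antisymm this (abs_nonneg t))
  exact .of_forall fun k => by simp [hu0 k, ht]

end

noncomputable section Lasso

variable {ι : Type*} [Fintype ι] {E : Type*} [NormedAddCommGroup E] [InnerProductSpace ℝ E]

def lassoObjective (T : EuclideanSpace ℝ ι →ₗ[ℝ] E) (b : E) (lam : ℝ)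
    (x : EuclideanSpace ℝ ι) : ℝ :=
  1 / 2 * ‖T x - b‖ ^ 2 + lam * ∑ i, |x i|

def l1Gap (lam : ℝ) (g x : EuclideanSpace ℝ ι) : ℝ :=
  ∑ i, (lam * |x i| + g i * x i)

def lassoSolutionSet (T : EuclideanSpace ℝ ι →ₗ[ℝ] E) (y : E) (lam : ℝ)
    (g : EuclideanSpace ℝ ι) : Set (EuclideanSpace ℝ ι) :=
  {x | T x = y ∧ ∀ i, lam * |x i| + g i * x i = 0}

theorem norm_le_sum_abs (x : EuclideanSpace ℝ ι) : ‖x‖ ≤ ∑ i, |x i| := by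
  rw [EuclideanSpace.norm_eq, Real.sqrt_le_left (by positivity)]
  simpa only [Real.norm_eq_abs, sq_abs] using
    sum_sq_le_sq_sum_of_nonneg (s := univ) fun i _ => abs_nonneg (x i)

theorem convexOn_sum_abs : ConvexOn ℝ univ fun x : EuclideanSpace ℝ ι => ∑ i, |x i| := by
  refine ⟨convex_univ, fun x _ y _ a c ha hc _ => ?_⟩
  simp only [smul_eq_mul, mul_sum, ← sum_add_distrib]
  gcongr with i
  calc |(a • x + c • y) i| = |a * x i + c * y i| := by simp
    _ ≤ a * |x i| + c * |y i| := by
      simpa [abs_mul, abs_of_nonneg ha, abs_of_nonneg hc] using abs_add_le (a * x i) (c * y i)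

theorem l1Gap_eq (lam : ℝ) (g x : EuclideanSpace ℝ ι) :
    l1Gap lam g x = lam * ∑ i, |x i| + ⟪g, x⟫ := by
  simp [l1Gap, sum_add_distrib, mul_sum, PiLp.inner_apply, mul_comm]

theorem l1Gap_nonneg {lam : ℝ} {g : EuclideanSpace ℝ ι} (hg : ∀ i, |g i| ≤ lam)
    (x : EuclideanSpace ℝ ι) : 0 ≤ l1Gap lam g x :=
  sum_nonneg fun i _ => mul_abs_add_mul_nonneg (hg i) (x i)

theorem l1Gap_eq_zero_iff {lam : ℝ} {g : EuclideanSpace ℝ ι} (hg : ∀ i, |g i| ≤ lam)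
    (x : EuclideanSpace ℝ ι) : l1Gap lam g x = 0 ↔ ∀ i, lam * |x i| + g i * x i = 0 := by
  simpa [l1Gap] using
    sum_eq_zero_iff_of_nonneg fun i (_ : i ∈ Finset.univ) => mul_abs_add_mul_nonneg (hg i) (x i)

theorem l1Gap_eq_zero_and_abs_le_of_isMin [DecidableEq ι] {lam : ℝ} {g x : EuclideanSpace ℝ ι}
    (hx : ∀ y, l1Gap lam g x ≤ l1Gap lam g y) : l1Gap lam g x = 0 ∧ ∀ i, |g i| ≤ lam := by
  have hsingle : ∀ i t, l1Gap lam g (EuclideanSpace.single i t) = lam * |t| + g i * t := by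
    intro i t
    rw [l1Gap, sum_eq_single i (fun j _ hj => by simp [hj]) (by simp)]
    simp
  have hzero : l1Gap lam g 0 = 0 := by simp [l1Gap]
  have htwo : l1Gap lam g ((2 : ℝ) • x) = 2 * l1Gap lam g x := by
    simp only [l1Gap, mul_sum, PiLp.smul_apply, smul_eq_mul, abs_mul, abs_two]
    exact sum_congr rfl fun i _ => by ring
  have hx0 : l1Gap lam g x = 0 := by linarith [hx 0, hx ((2 : ℝ) • x)]
  have hpm : ∀ i t, 0 ≤ lam * |t| + g i * t := fun i t => by
    simpa only [hx0, hsingle] using hx (EuclideanSpace.single i t)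
  refine ⟨hx0, fun i => abs_le.2 ⟨?_, ?_⟩⟩
  · linarith [show 0 ≤ lam + g i by simpa using hpm i 1]
  · linarith [show 0 ≤ lam - g i by simpa [sub_eq_add_neg] using hpm i (-1)]

variable (T : EuclideanSpace ℝ ι →ₗ[ℝ] E) (b : E) {lam : ℝ}

theorem continuous_lassoObjective (lam : ℝ) : Continuous (lassoObjective T b lam) := by
  have := T.continuous_of_finiteDimensional
  unfold lassoObjective
  fun_prop

theorem mul_norm_le_lassoObjective (hlam : 0 ≤ lam) (x : EuclideanSpace ℝ ι) :
    lam * ‖x‖ ≤ lassoObjective T b lam x := by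
  rw [lassoObjective]
  nlinarith [mul_le_mul_of_nonneg_left (norm_le_sum_abs x) hlam, sq_nonneg ‖T x - b‖]

theorem exists_forall_lassoObjective_le (hlam : 0 < lam) :
    ∃ xb, ∀ y, lassoObjective T b lam xb ≤ lassoObjective T b lam y :=
  (continuous_lassoObjective T b lam).exists_forall_le <|
    tendsto_atTop_mono (mul_norm_le_lassoObjective T b hlam.le)
      (tendsto_norm_cocompact_atTop.const_mul_atTop hlam)

theorem lassoObjective_eq {xb g : EuclideanSpace ℝ ι} (hg : ∀ v, ⟪g, v⟫ = ⟪T xb - b, T v⟫)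
    (x : EuclideanSpace ℝ ι) :
    lassoObjective T b lam x = lassoObjective T b lam xb + 1 / 2 * ‖T x - T xb‖ ^ 2 +
      l1Gap lam g x - l1Gap lam g xb := by
  have hsplit : T x - b = (T x - T xb) + (T xb - b) := by abel
  have hcross : ⟪T x - T xb, T xb - b⟫ = ⟪g, x⟫ - ⟪g, xb⟫ := by
    rw [real_inner_comm, ← map_sub, ← hg, inner_sub_right]
  rw [lassoObjective, lassoObjective, l1Gap_eq, l1Gap_eq, hsplit, norm_add_sq_real, hcross]
  ring

theorem lassoObjective_optimality (hlam : 0 ≤ lam) {xb g : EuclideanSpace ℝ ι}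
    (hxb : ∀ y, lassoObjective T b lam xb ≤ lassoObjective T b lam y)
    (hg : ∀ v, ⟪g, v⟫ = ⟪T xb - b, T v⟫) :
    (∀ i, |g i| ≤ lam) ∧ ∀ x, lassoObjective T b lam x =
      lassoObjective T b lam xb + (1 / 2 * ‖T x - T xb‖ ^ 2 + l1Gap lam g x) := by
  classical
  have hsub := ((convexOn_sum_abs (ι := ι)).smul hlam).neg_inner_le_of_forall_le_add_sq T b
    fun y => by simpa only [lassoObjective, add_comm, smul_eq_mul] using hxb y
  have hmin : ∀ y, l1Gap lam g xb ≤ l1Gap lam g y := fun y => by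
    have := hsub y
    rw [← hg, inner_sub_right] at this
    simp only [smul_eq_mul] at this
    rw [l1Gap_eq, l1Gap_eq]
    linarith
  obtain ⟨hxb0, hgle⟩ := l1Gap_eq_zero_and_abs_le_of_isMin hmin
  refine ⟨hgle, fun x => ?_⟩
  rw [lassoObjective_eq T b hg x, hxb0]
  ring

theorem setOf_forall_lassoObjective_le (hlam : 0 ≤ lam) {xb g : EuclideanSpace ℝ ι}
    (hxb : ∀ y, lassoObjective T b lam xb ≤ lassoObjective T b lam y)
    (hg : ∀ v, ⟪g, v⟫ = ⟪T xb - b, T v⟫) :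
    {y | ∀ z, lassoObjective T b lam y ≤ lassoObjective T b lam z} =
      lassoSolutionSet T (T xb) lam g := by
  obtain ⟨hgle, hΦ⟩ := lassoObjective_optimality T b hlam hxb hg
  ext y
  simp only [mem_ofPred_eq, lassoSolutionSet, ← l1Gap_eq_zero_iff hgle]
  constructor
  · intro hy
    have hle := hy xb
    rw [hΦ y] at hle
    have hgap := l1Gap_nonneg hgle y
    have hnorm : ‖T y - T xb‖ = 0 := by nlinarith [norm_nonneg (T y - T xb)]
    exact ⟨sub_eq_zero.1 (norm_eq_zero.1 hnorm), by linarith [sq_nonneg ‖T y - T xb‖]⟩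
  · rintro ⟨hTy, hy⟩ z
    simpa [hΦ y, hTy, hy] using hxb z

theorem isClosed_lassoSolutionSet (y : E) (lam : ℝ) (g : EuclideanSpace ℝ ι) :
    IsClosed (lassoSolutionSet T y lam g) := by
  have := T.continuous_of_finiteDimensional
  simp only [lassoSolutionSet, ofPred_and, ofPred_forall]
  exact (isClosed_eq (by fun_prop) continuous_const).inter
    (isClosed_iInter fun i => isClosed_eq (by fun_prop) continuous_const)

theorem eventually_add_smul_mem_lassoSolutionSet (y : E) (hlam : 0 < lam)
    {g : EuclideanSpace ℝ ι} (hg : ∀ i, |g i| ≤ lam) {α : Type*} {L : Filter α}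
    {x u δ : α → EuclideanSpace ℝ ι} {d η : α → ℝ} {δh : EuclideanSpace ℝ ι}
    (huS : ∀ k, u k ∈ lassoSolutionSet T y lam g) (hd : ∀ k, 0 < d k)
    (hxu : ∀ k, x k - u k = d k • δ k) (hδ : Tendsto δ L (𝓝 δh)) (hη : Tendsto η L (𝓝 0))
    (hres : ∀ k, ‖T (x k) - y‖ + l1Gap lam g (x k) ≤ η k * d k) :
    ∀ᶠ k in L, u k + (d k / 3) • δh ∈ lassoSolutionSet T y lam g := by
  rcases L.eq_or_neBot with rfl | _
  · exact eventually_bot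
  have hTδh : T δh = 0 := by
    have hTδ : ∀ k, ‖T (δ k)‖ ≤ η k := fun k => by
      have hTx : ‖T (x k) - y‖ = d k * ‖T (δ k)‖ := by
        rw [← (huS k).1, ← map_sub, hxu k, map_smul, norm_smul, Real.norm_of_nonneg (hd k).le]
      have := (le_add_of_nonneg_right (l1Gap_nonneg hg (x k))).trans (hres k)
      rw [hTx, mul_comm (η k)] at this
      exact le_of_mul_le_mul_left this (hd k)
    exact norm_le_zero_iff.1 <| le_of_tendsto_of_tendsto'
      ((T.continuous_of_finiteDimensional.tendsto δh).comp hδ).norm hη hTδ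
  have hcoord : ∀ i, ∀ᶠ k in L,
      lam * |(u k + (d k / 3) • δh) i| + g i * (u k + (d k / 3) • δh) i = 0 := fun i => by
    have hs : Tendsto (fun k => δ k i) L (𝓝 (δh i)) :=
      ((EuclideanSpace.proj i).continuous.tendsto δh).comp hδ
    have hxi : ∀ k, x k i = u k i + d k * δ k i := fun k => by
      simpa using congrArg (· i) (eq_add_of_sub_eq' (hxu k))
    refine (eventually_mul_abs_add_mul_eq_zero hlam (hg i) (fun k => (huS k).2 i) hd hs hη
      fun k => ?_).mono fun k hk => by
        simpa only [PiLp.add_apply, PiLp.smul_apply, smul_eq_mul] using hk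
    rw [← hxi k]
    calc lam * |x k i| + g i * x k i ≤ l1Gap lam g (x k) :=
          single_le_sum (fun j _ => mul_abs_add_mul_nonneg (hg j) (x k j)) (mem_univ i)
      _ ≤ η k * d k := by linarith [hres k, norm_nonneg (T (x k) - y)]
  filter_upwards [eventually_all.2 hcoord] with k hk
  exact ⟨by rw [map_add, map_smul, hTδh, smul_zero, add_zero, (huS k).1], hk⟩

theorem exists_infDist_lassoSolutionSet_le (y : E) (hlam : 0 < lam) {g : EuclideanSpace ℝ ι}
    (hg : ∀ i, |g i| ≤ lam) (hne : (lassoSolutionSet T y lam g).Nonempty) :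
    ∃ κ > 0, ∀ x, infDist x (lassoSolutionSet T y lam g) ≤ κ * (‖T x - y‖ + l1Gap lam g x) := by
  set S := lassoSolutionSet T y lam g
  -- Otherwise, from nearest points `u` to points `x` with residual `o(dist(x, S))`, a limit
  -- direction `δh` of `x - u` is tangent to `S`; then `u + (d/3) δh ∈ S` is closer to `x` than `u`.
  by_contra! h
  choose x hx using fun k : ℕ => h (k + 1) k.cast_add_one_pos
  set d := fun k => infDist (x k) S
  have hd : ∀ k, 0 < d k := fun k =>
    (mul_nonneg k.cast_add_one_pos.le (add_nonneg (norm_nonneg _) (l1Gap_nonneg hg _))).trans_lt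
      (hx k)
  have hres : ∀ k, ‖T (x k) - y‖ + l1Gap lam g (x k) ≤ 1 / ((k : ℝ) + 1) * d k := fun k => by
    rw [div_mul_eq_mul_div, one_mul, le_div_iff₀ k.cast_add_one_pos, mul_comm]
    exact (hx k).le
  choose u huS hu using fun k =>
    (isClosed_lassoSolutionSet T y lam g).exists_infDist_eq_dist hne (x k)
  set δ := fun k => (d k)⁻¹ • (x k - u k)
  have hxu : ∀ k, x k - u k = d k • δ k := fun k => by simp [δ, smul_smul, (hd k).ne']
  have hδ : ∀ k, δ k ∈ sphere (0 : EuclideanSpace ℝ ι) 1 := fun k => by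
    rw [mem_sphere_zero_iff_norm, norm_smul, Real.norm_of_nonneg (inv_nonneg.2 (hd k).le),
      ← dist_eq_norm, ← hu k]
    exact inv_mul_cancel₀ (hd k).ne'
  obtain ⟨δh, hδh, φ, hφ, hlim⟩ := (isCompact_sphere _ _).tendsto_subseq hδ
  set L := atTop.map φ
  have hδL : Tendsto δ L (𝓝 δh) := tendsto_map'_iff.2 hlim
  have hηL : Tendsto (fun k : ℕ => 1 / ((k : ℝ) + 1)) L (𝓝 0) :=
    tendsto_one_div_add_atTop_nhds_zero_nat.mono_left hφ.tendsto_atTop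
  have hnear : ∀ᶠ k in L, ‖δ k - (3 : ℝ)⁻¹ • δh‖ < 1 := by
    have : ‖δh - (3 : ℝ)⁻¹ • δh‖ < 1 := by
      rw [show δh - (3 : ℝ)⁻¹ • δh = (2 / 3 : ℝ) • δh by module, norm_smul,
        mem_sphere_zero_iff_norm.1 hδh]
      norm_num
    exact (hδL.sub_const _).norm.eventually_lt_const this
  have : L.NeBot := map_neBot
  obtain ⟨k, hz, hk⟩ := ((eventually_add_smul_mem_lassoSolutionSet T y hlam hg huS hd hxu hδL hηL
    hres).and hnear).exists
  have hdist : dist (x k) (u k + (d k / 3) • δh) = d k * ‖δ k - (3 : ℝ)⁻¹ • δh‖ := by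
    rw [dist_eq_norm, show x k - (u k + (d k / 3) • δh) = d k • (δ k - (3 : ℝ)⁻¹ • δh) by
      rw [← sub_sub, hxu k]; module, norm_smul, Real.norm_of_nonneg (hd k).le]
  have := (infDist_le_dist_of_mem hz).trans_eq hdist
  nlinarith [hd k]

theorem exists_sq_infDist_lassoSolutionSet_le (y : E) (hlam : 0 < lam) {g : EuclideanSpace ℝ ι}
    (hg : ∀ i, |g i| ≤ lam) (hne : (lassoSolutionSet T y lam g).Nonempty) (R : ℝ) :
    ∃ μ > 0, ∀ x, ‖x‖ ≤ R →
      μ * infDist x (lassoSolutionSet T y lam g) ^ 2 ≤ 1 / 2 * ‖T x - y‖ ^ 2 + l1Gap lam g x := by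
  obtain ⟨κ, hκ, hS⟩ := exists_infDist_lassoSolutionSet_le T y hlam hg hne
  set M := Fintype.card ι * (2 * lam * |R|)
  have hM : 0 ≤ M := by positivity
  refine ⟨1 / (κ ^ 2 * (4 + 2 * M)), by positivity, fun x hx => ?_⟩
  have hgapM : l1Gap lam g x ≤ M := by
    calc l1Gap lam g x ≤ ∑ _i : ι, 2 * lam * |R| := sum_le_sum fun i _ => ?_
      _ = M := by simp [M]
    have hxi : |x i| ≤ |R| := ((PiLp.norm_apply_le x i).trans hx).trans (le_abs_self R)
    linarith [le_abs_self (g i * x i), abs_mul (g i) (x i),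
      mul_le_mul_of_nonneg_right (hg i) (abs_nonneg (x i)), mul_le_mul_of_nonneg_left hxi hlam.le]
  have hgap0 := l1Gap_nonneg hg x
  rw [div_mul_eq_mul_div, one_mul, div_le_iff₀ (by positivity)]
  calc infDist x (lassoSolutionSet T y lam g) ^ 2
      ≤ (κ * (‖T x - y‖ + l1Gap lam g x)) ^ 2 := pow_le_pow_left₀ infDist_nonneg (hS x) 2
    _ ≤ κ ^ 2 * ((4 + 2 * M) * (1 / 2 * ‖T x - y‖ ^ 2 + l1Gap lam g x)) := by
        rw [mul_pow]
        gcongr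
        nlinarith [sq_nonneg (‖T x - y‖ - l1Gap lam g x), norm_nonneg (T x - y)]
    _ = _ := by ring

theorem norm_le_div_of_lassoObjective_le (hlam : 0 < lam) {x : EuclideanSpace ℝ ι} {ν : ℝ}
    (hx : lassoObjective T b lam x ≤ ν) : ‖x‖ ≤ ν / lam := by
  rw [le_div_iff₀ hlam, mul_comm]
  exact (mul_norm_le_lassoObjective T b hlam.le x).trans hx

theorem exists_sq_infDist_le_lassoObjective_sub (hlam : 0 < lam) {T' : E →ₗ[ℝ] EuclideanSpace ℝ ι}
    (hT' : ∀ u v, ⟪T' u, v⟫ = ⟪u, T v⟫) (R : ℝ) :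
    ∃ μ > 0, ∀ x, ‖x‖ ≤ R → ∀ z ∈ {y | ∀ z, lassoObjective T b lam y ≤ lassoObjective T b lam z},
      μ * infDist x {y | ∀ z, lassoObjective T b lam y ≤ lassoObjective T b lam z} ^ 2 ≤
        lassoObjective T b lam x - lassoObjective T b lam z := by
  obtain ⟨xb, hxb⟩ := exists_forall_lassoObjective_le T b hlam
  have hg : ∀ v, ⟪T' (T xb - b), v⟫ = ⟪T xb - b, T v⟫ := hT' _
  obtain ⟨hgle, hΦ⟩ := lassoObjective_optimality T b hlam.le hxb hg
  have hS := setOf_forall_lassoObjective_le T b hlam.le hxb hg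
  have hxbS : xb ∈ lassoSolutionSet T (T xb) lam (T' (T xb - b)) := hS ▸ hxb
  rw [hS]
  obtain ⟨μ, hμ, hgrowth⟩ := exists_sq_infDist_lassoSolutionSet_le T (T xb) hlam hgle ⟨xb, hxbS⟩ R
  refine ⟨μ, hμ, fun x hx z hz => ?_⟩
  rw [hΦ x, hΦ z, hz.1, sub_self, norm_zero, (l1Gap_eq_zero_iff hgle z).2 hz.2]
  linarith [hgrowth x hx]

theorem lassoObjective_error_bound (hlam : 0 < lam) {T' : E →ₗ[ℝ] EuclideanSpace ℝ ι}
    (hT' : ∀ u v, ⟪T' u, v⟫ = ⟪u, T v⟫) {p : EuclideanSpace ℝ ι → EuclideanSpace ℝ ι}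
    (hp : ∀ z, IsProx (fun y => lam * ∑ i, |y i|) (z - T' (T z - b)) (p z)) (ν : ℝ) :
    ∃ τ > 0, ∀ x, lassoObjective T b lam x ≤ ν → ‖x - p x‖ ≤ 1 →
      infDist x {y | ∀ z, lassoObjective T b lam y ≤ lassoObjective T b lam z} ≤
        τ * ‖x - p x‖ := by
  obtain ⟨xb, hxb⟩ := exists_forall_lassoObjective_le T b hlam
  obtain ⟨μ, hμ, hgrowth⟩ := exists_sq_infDist_le_lassoObjective_sub T b hlam hT' (ν / lam + 1)
  obtain ⟨C, hC, hCv⟩ := (LinearMap.toContinuousLinearMap (LinearMap.id - T' ∘ₗ T)).bound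
  refine ⟨1 + C / μ, by positivity, fun x hxν hx1 => ?_⟩
  rw [← dist_eq_norm]
  refine infDist_le_of_sq_infDist_le (isClosed_setOf_forall_le (continuous_lassoObjective T b lam))
    ⟨xb, hxb⟩ hμ hC.le fun z hz => ?_
  have hpx : ‖p x‖ ≤ ν / lam + 1 := (norm_le_norm_add_norm_sub x (p x)).trans
    (add_le_add (norm_le_div_of_lassoObjective_le T b hlam hxν) hx1)
  calc μ * infDist (p x) _ ^ 2
      ≤ lassoObjective T b lam (p x) - lassoObjective T b lam z := hgrowth (p x) hpx z hz
    _ ≤ ⟪(x - p x) - T' (T (x - p x)), p x - z⟫ :=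
        (convexOn_sum_abs.smul hlam.le).isProx_sub_le_inner hT' b (hp x) z
    _ ≤ C * dist x (p x) * dist (p x) z := by
        rw [dist_eq_norm, dist_eq_norm]
        exact (real_inner_le_norm _ _).trans (mul_le_mul_of_nonneg_right (hCv _) (norm_nonneg _))

end Lasso

/-- Local error bound for the LASSO problem
`min (1/2)‖Ax − b‖² + λ‖x‖₁`.  Here `p z = prox_{λ‖·‖₁}(z − Aᵀ(Az − b))`. -/
theorem error_bound_lasso {n m : ℕ}
    (A : Matrix (Fin m) (Fin n) ℝ) (b : EuclideanSpace ℝ (Fin m))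
    (lam : ℝ) (hlam : 0 < lam)
    (F : EuclideanSpace ℝ (Fin n) → ℝ)
    (hF : ∀ x, F x = (1 / 2) * ‖Matrix.toEuclideanLin A x - b‖ ^ 2 + lam * ∑ i, |x i|)
    (p : EuclideanSpace ℝ (Fin n) → EuclideanSpace ℝ (Fin n))
    (hp : ∀ z, IsProx (fun y => lam * ∑ i, |y i|)
      (z - Matrix.toEuclideanLin Aᵀ (Matrix.toEuclideanLin A z - b)) (p z))
    (Xstar : Set (EuclideanSpace ℝ (Fin n)))
    (hXstar : Xstar = {y | ∀ z, F y ≤ F z}) :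
    ∀ ν : ℝ, sInf (Set.range F) ≤ ν → ∃ δ > (0 : ℝ), ∃ τ > (0 : ℝ),
      ∀ x : EuclideanSpace ℝ (Fin n), F x ≤ ν → ‖x - p x‖ ≤ δ →
        Metric.infDist x (closure Xstar) ≤ τ * ‖x - p x‖ := by
  intro ν _
  have hT' : ∀ u v, ⟪toEuclideanLin Aᵀ u, v⟫ = ⟪u, toEuclideanLin A v⟫ := fun u v => by
    rw [← conjTranspose_eq_transpose_of_trivial, toEuclideanLin_conjTranspose_eq_adjoint,
      LinearMap.adjoint_inner_left]
  obtain rfl : F = lassoObjective (toEuclideanLin A) b lam := funext hF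
  obtain ⟨τ, hτ, hbound⟩ := lassoObjective_error_bound _ b hlam hT' hp ν
  refine ⟨1, one_pos, τ, hτ, fun x hxν hx1 => ?_⟩
  rw [hXstar, (isClosed_setOf_forall_le (continuous_lassoObjective _ b lam)).closure_eq]
  exact hbound x hxν hx1
end

section
/- Let 𝒥 be a partition of {1,…,n} with weights w_J > 0, A an m×n real matrix, b ∈ ℝᵐ, and consider the group LASSO problem min_{x∈ℝⁿ} F(x) = (1/2)‖Ax − b‖² + Σ_{J∈𝒥} w_J‖x_J‖₂. Then the local error bound holds: for every ν ≥ inf F there exist δ > 0 and τ > 0 such that dist(x, closure(X*)) ≤ τ·‖x − prox_{f₁}(x − Aᵀ(Ax − b))‖ for all x ∈ ℝⁿ with F(x) ≤ ν and ‖x − prox_{f₁}(x − Aᵀ(Ax − b))‖ ≤ δ, where f₁(x) = Σ_{J∈𝒥} w_J‖x_J‖₂ and X* is the set of minimizers of F. -/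
/-!
Let `x̄` minimize `F` and `g = Aᵀ(A x̄ - b)`. Optimality of `x̄` and positive homogeneity of `f₁`
give `‖g_J‖ ≤ w_J` and `f₁ x̄ + ⟪g, x̄⟫ = 0`, whence
`F x - F x̄ = ½‖A x - A x̄‖² + Σ_J (w_J ‖x_J‖ + ⟪g_J, x_J⟫)` with nonnegative summands. The
`J`-th summand vanishes exactly on a ray (on `{0}` if `‖g_J‖ < w_J`), so the solution set is a
polyhedron, and the distance of `x_J` to that ray is bounded by the square root of the summand.
Hoffman's error bound for this polyhedron, proved on compact sets by induction on the number of
inequality constraints, then gives quadratic growth `dist(x, X*)² ≤ C (F x - F x̄)` on bounded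
sets. Finally, for `p = p x` the vector `(x - p) - AᵀA(x - p)`, of norm `O(‖x - p‖)`, is a
subgradient of `F` at `p`, so `F p - F x̄ ≤ O(‖x - p‖) dist(p, X*)`; combined with quadratic
growth at `p` this gives `dist(p, X*) = O(‖x - p‖)`.
-/

open Set Finset Matrix

open Metric Filter Topology
open scoped Pointwise InnerProductSpace

section ErrorBound

variable {α : Type*} [PseudoMetricSpace α]

def HasErrorBoundOn (Q : Set α) (r : α → ℝ) (K : Set α) : Prop :=
  ∃ C, ∀ x ∈ K, infDist x Q ≤ C * r x

variable {Q : Set α} {r : α → ℝ}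

lemma HasErrorBoundOn.mono {K K' : Set α} (h : HasErrorBoundOn Q r K)
    (hK : K' ⊆ K) : HasErrorBoundOn Q r K' :=
  let ⟨C, hC⟩ := h; ⟨C, fun x hx => hC x (hK hx)⟩

lemma HasErrorBoundOn.union (hr : ∀ x, 0 ≤ r x) {K K' : Set α}
    (h : HasErrorBoundOn Q r K) (h' : HasErrorBoundOn Q r K') : HasErrorBoundOn Q r (K ∪ K') := by
  obtain ⟨C, hC⟩ := h
  obtain ⟨C', hC'⟩ := h'
  refine ⟨max C C', fun x hx => ?_⟩
  rcases hx with hx | hx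
  · exact (hC x hx).trans (mul_le_mul_of_nonneg_right (le_max_left _ _) (hr x))
  · exact (hC' x hx).trans (mul_le_mul_of_nonneg_right (le_max_right _ _) (hr x))

lemma IsCompact.hasErrorBoundOn (hr : ∀ x, 0 ≤ r x) {K : Set α}
    (hK : IsCompact K) (hloc : ∀ z ∈ K, ∃ U ∈ 𝓝 z, HasErrorBoundOn Q r U) :
    HasErrorBoundOn Q r K := by
  refine hK.induction_on ⟨0, by simp⟩ (fun _ _ hst h => h.mono hst)
    (fun _ _ h h' => h.union hr h') fun z hz => ?_
  obtain ⟨U, hU, hQ⟩ := hloc z hz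
  exact ⟨U, mem_nhdsWithin_of_mem_nhds hU, hQ⟩

lemma exists_hasErrorBoundOn_nhds_of_pos (hr : Continuous r) {z : α}
    (hz : 0 < r z) : ∃ U ∈ 𝓝 z, HasErrorBoundOn Q r U := by
  refine ⟨ball z 1 ∩ r ⁻¹' Ioi (r z / 2),
    inter_mem (ball_mem_nhds z one_pos) (hr.continuousAt.preimage_mem_nhds (Ioi_mem_nhds
      (half_lt_self hz))), 2 * (infDist z Q + 1) / r z, fun x ⟨hx, hrx⟩ => ?_⟩
  have hxz : infDist x Q ≤ infDist z Q + 1 :=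
    infDist_le_infDist_add_dist.trans (by linarith [mem_ball.1 hx])
  have hrx : r z / 2 < r x := hrx
  rw [div_mul_eq_mul_div, le_div_iff₀ hz]
  nlinarith [(infDist_nonneg : 0 ≤ infDist z Q)]

end ErrorBound

lemma infDist_vadd_set_eq_sub {α : Type*} [SeminormedAddCommGroup α] (a x : α) (s : Set α) :
    infDist x (a +ᵥ s) = infDist (x - a) s := by
  conv_lhs => rw [← add_sub_cancel a x, ← vadd_eq_add]
  simp only [infDist, infEDist_vadd]

lemma infDist_le_mul_of_sq_le {α : Type*} [PseudoMetricSpace α] {X : Set α} (hX : X.Nonempty)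
    {x : α} {a C k : ℝ} (hC : 0 ≤ C) (hk : 0 ≤ k) (hsq : infDist x X ^ 2 ≤ C * a)
    (ha : ∀ y ∈ X, a ≤ k * dist x y) : infDist x X ≤ C * k := by
  have had : a ≤ k * infDist x X := by
    rcases hk.eq_or_lt with rfl | hk
    · obtain ⟨y, hy⟩ := hX
      simpa using ha y hy
    · rw [← div_le_iff₀' hk]
      exact (le_infDist hX).2 fun y hy => (div_le_iff₀' hk).2 (ha y hy)
  by_contra! h
  have hd : 0 < infDist x X := (mul_nonneg hC hk).trans_lt h
  nlinarith [mul_le_mul_of_nonneg_left had hC, mul_lt_mul_of_pos_right h hd]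

section Polyhedron

variable {E : Type*} [NormedAddCommGroup E] [InnerProductSpace ℝ E]
  {G : Type*} [NormedAddCommGroup G] [NormedSpace ℝ G] {ι : Type*}
  (M : E →ₗ[ℝ] G) (c : ι → E →ₗ[ℝ] ℝ)

def polyhedron (S : Finset ι) (y : G) : Set E :=
  {x | M x = y ∧ ∀ i ∈ S, 0 ≤ c i x}

noncomputable def polyhedronResidual (S : Finset ι) (y : G) (x : E) : ℝ :=
  ‖M x - y‖ + ∑ i ∈ S, max 0 (-c i x)

variable {M c}

lemma polyhedronResidual_nonneg (S : Finset ι) (y : G) (x : E) :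
    0 ≤ polyhedronResidual M c S y x :=
  add_nonneg (norm_nonneg _) (Finset.sum_nonneg fun _ _ => le_max_left _ _)

lemma polyhedronResidual_eq_zero_iff {S : Finset ι} {y : G} {x : E} :
    polyhedronResidual M c S y x = 0 ↔ x ∈ polyhedron M c S y := by
  have hsum : 0 ≤ ∑ i ∈ S, max 0 (-c i x) := Finset.sum_nonneg fun _ _ => le_max_left _ _
  rw [polyhedronResidual, add_eq_zero_iff_of_nonneg (norm_nonneg _) hsum, norm_sub_eq_zero_iff,
    Finset.sum_eq_zero_iff_of_nonneg fun _ _ => le_max_left _ _]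
  simp only [max_eq_left_iff, neg_nonpos, polyhedron, mem_ofPred_eq]

lemma polyhedronResidual_erase_le [DecidableEq ι] (S : Finset ι) (i : ι) (y : G) (x : E) :
    polyhedronResidual M c (S.erase i) y x ≤ polyhedronResidual M c S y x :=
  add_le_add le_rfl <| Finset.sum_le_sum_of_subset_of_nonneg (Finset.erase_subset i S)
    fun j _ _ => le_max_left 0 (-c j x)

lemma polyhedron_erase_subset [DecidableEq ι] (S : Finset ι) (i : ι) (y : G) :
    polyhedron M c S y ⊆ polyhedron M c (S.erase i) y :=
  fun _ hx => ⟨hx.1, fun j hj => hx.2 j (Finset.mem_of_mem_erase hj)⟩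

lemma mem_polyhedron_of_mem_erase [DecidableEq ι] {S : Finset ι} {i : ι} {y : G} {x : E}
    (hx : x ∈ polyhedron M c (S.erase i) y) (hxi : 0 ≤ c i x) : x ∈ polyhedron M c S y := by
  refine ⟨hx.1, fun j hj => ?_⟩
  rcases eq_or_ne j i with rfl | hji
  · exact hxi
  · exact hx.2 j (Finset.mem_erase.2 ⟨hji, hj⟩)

lemma polyhedron_eq_vadd {S : Finset ι} {y : G} {a : E} (hMa : M a = y)
    (hca : ∀ i ∈ S, c i a = 0) : polyhedron M c S y = a +ᵥ polyhedron M c S 0 := by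
  ext t
  simp only [mem_vadd_set_iff_neg_vadd_mem, polyhedron, mem_ofPred_eq, vadd_eq_add, map_add,
    map_neg, hMa]
  exact and_congr (by rw [neg_add_eq_zero, eq_comm])
    (forall₂_congr fun i hi => by rw [hca i hi, neg_zero, zero_add])

lemma polyhedronResidual_eq_sub {S : Finset ι} {y : G} {a : E} (hMa : M a = y)
    (hca : ∀ i ∈ S, c i a = 0) (x : E) :
    polyhedronResidual M c S y x = polyhedronResidual M c S 0 (x - a) := by
  simp only [polyhedronResidual, map_sub, hMa, sub_zero]
  exact congrArg _ (Finset.sum_congr rfl fun i hi => by rw [hca i hi, sub_zero])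

lemma smul_polyhedron_zero {S : Finset ι} {t : ℝ} (ht : 0 < t) :
    t • polyhedron M c S 0 = polyhedron M c S 0 := by
  ext x
  simp only [mem_smul_set_iff_inv_smul_mem₀ ht.ne', polyhedron, mem_ofPred_eq, map_smul,
    smul_eq_zero, inv_ne_zero ht.ne', false_or, smul_eq_mul,
    mul_nonneg_iff_of_pos_left (inv_pos.2 ht)]

lemma infDist_smul_polyhedron_zero {S : Finset ι} {t : ℝ} (ht : 0 < t) (x : E) :
    infDist (t • x) (polyhedron M c S 0) = t * infDist x (polyhedron M c S 0) := by
  conv_lhs => rw [← smul_polyhedron_zero ht]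
  rw [infDist_smul₀ ht.ne', Real.norm_of_nonneg ht.le]

lemma polyhedronResidual_zero_smul {S : Finset ι} {t : ℝ} (ht : 0 ≤ t) (x : E) :
    polyhedronResidual M c S 0 (t • x) = t * polyhedronResidual M c S 0 x := by
  simp only [polyhedronResidual, map_smul, sub_zero, norm_smul, Real.norm_of_nonneg ht, mul_add,
    Finset.mul_sum, smul_eq_mul, ← mul_neg, mul_max_of_nonneg _ _ ht, mul_zero]

variable (M c) in
def linealitySpace (S : Finset ι) : Submodule ℝ E :=
  LinearMap.ker M ⊓ ⨅ i ∈ S, LinearMap.ker (c i)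

lemma mem_linealitySpace {S : Finset ι} {v : E} :
    v ∈ linealitySpace M c S ↔ M v = 0 ∧ ∀ i ∈ S, c i v = 0 := by
  simp [linealitySpace, Submodule.mem_iInf]

variable [FiniteDimensional ℝ E]

lemma continuous_polyhedronResidual (S : Finset ι) (y : G) :
    Continuous (polyhedronResidual M c S y) :=
  ((M.continuous_of_finiteDimensional.sub continuous_const).norm).add <|
    continuous_finsetSum _ fun i _ =>
      continuous_const.max (c i).continuous_of_finiteDimensional.neg

lemma isClosed_polyhedron (S : Finset ι) (y : G) : IsClosed (polyhedron M c S y) := by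
  have h : polyhedron M c S y = polyhedronResidual M c S y ⁻¹' {0} := by
    ext x; exact polyhedronResidual_eq_zero_iff.symm
  exact h ▸ isClosed_singleton.preimage (continuous_polyhedronResidual S y)

variable [DecidableEq ι]

/-- Near a point of the polyhedron where the constraint `i` is inactive, the nearest point of the
polyhedron without that constraint still satisfies it. -/
lemma exists_hasErrorBoundOn_nhds_of_inactive {S : Finset ι} {y : G} {z : E}
    (hz : z ∈ polyhedron M c S y) {i : ι} (hzi : 0 < c i z)
    (h : HasErrorBoundOn (polyhedron M c (S.erase i) y) (polyhedronResidual M c (S.erase i) y)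
      (closedBall z 1)) :
    ∃ U ∈ 𝓝 z, HasErrorBoundOn (polyhedron M c S y) (polyhedronResidual M c S y) U := by
  obtain ⟨C, hC⟩ := h
  set r := polyhedronResidual M c S y
  obtain ⟨ε, hε, hball⟩ := Metric.mem_nhds_iff.1 <|
    (c i).continuous_of_finiteDimensional.continuousAt.preimage_mem_nhds (Ioi_mem_nhds hzi)
  have hr : Tendsto (fun x => max C 0 * r x) (𝓝 z) (𝓝 0) := by
    have := ((continuous_polyhedronResidual (M := M) (c := c) S y).tendsto z).const_mul
      (max C 0)
    rwa [polyhedronResidual_eq_zero_iff.2 hz, mul_zero] at this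
  have hev : ∀ᶠ x in 𝓝 z, x ∈ closedBall z 1 ∧ dist x z < ε / 2 ∧ max C 0 * r x < ε / 2 := by
    filter_upwards [closedBall_mem_nhds z one_pos, ball_mem_nhds z (half_pos hε),
      hr.eventually (gt_mem_nhds (half_pos hε))] with x h1 h2 h3
    exact ⟨h1, h2, h3⟩
  refine ⟨_, hev, max C 0, fun x ⟨hx1, hxz, hrx⟩ => ?_⟩
  obtain ⟨q, hq, hxq⟩ := (isClosed_polyhedron (S.erase i) y).exists_infDist_eq_dist
    ⟨z, polyhedron_erase_subset S i y hz⟩ x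
  have hdist : dist x q ≤ max C 0 * r x := by
    rw [← hxq]
    refine (hC x hx1).trans ?_
    exact (mul_le_mul_of_nonneg_right (le_max_left _ _)
      (polyhedronResidual_nonneg _ _ _)).trans
        (mul_le_mul_of_nonneg_left (polyhedronResidual_erase_le S i y x) (le_max_right _ _))
  have hqz : q ∈ ball z ε := by
    rw [mem_ball]
    linarith [dist_triangle_left q z x]
  exact (infDist_le_dist_of_mem (mem_polyhedron_of_mem_erase hq (hball hqz).le)).trans hdist

/-- A unit vector of the cone orthogonal to the lineality space makes some constraint
inactive, so the induction hypothesis applies near it. -/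
lemma hasErrorBoundOn_sphere_inter_orthogonal (S : Finset ι)
    (IH : ∀ i ∈ S, ∀ K : Set E, IsCompact K →
      HasErrorBoundOn (polyhedron M c (S.erase i) 0) (polyhedronResidual M c (S.erase i) 0) K) :
    HasErrorBoundOn (polyhedron M c S 0) (polyhedronResidual M c S 0)
      (sphere 0 1 ∩ (linealitySpace M c S)ᗮ) := by
  set L := linealitySpace M c S
  refine ((isCompact_sphere 0 1).inter_right L.isClosed_orthogonal).hasErrorBoundOn
    (polyhedronResidual_nonneg S 0) fun z ⟨hz1, hzL⟩ => ?_
  rcases (polyhedronResidual_nonneg (M := M) (c := c) S 0 z).lt_or_eq with hpos | hzero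
  · exact exists_hasErrorBoundOn_nhds_of_pos (continuous_polyhedronResidual S 0) hpos
  have hzP : z ∈ polyhedron M c S 0 := polyhedronResidual_eq_zero_iff.1 hzero.symm
  obtain ⟨i, hi, hzi⟩ : ∃ i ∈ S, 0 < c i z := by
    by_contra! h
    have hzL' : z ∈ L :=
      mem_linealitySpace.2 ⟨hzP.1, fun i hi => le_antisymm (h i hi) (hzP.2 i hi)⟩
    have hz0 : z = 0 :=
      (Submodule.mem_bot ℝ).1 (L.inf_orthogonal_eq_bot ▸ Submodule.mem_inf.2 ⟨hzL', hzL⟩)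
    simp [hz0] at hz1
  exact exists_hasErrorBoundOn_nhds_of_inactive hzP hzi (IH i hi _ (isCompact_closedBall z 1))

/-- The cone is invariant under translation by its lineality space and under positive scaling,
so the bound on unit vectors orthogonal to the lineality space propagates everywhere. -/
lemma hasErrorBoundOn_univ_polyhedron_zero (S : Finset ι)
    (IH : ∀ i ∈ S, ∀ K : Set E, IsCompact K →
      HasErrorBoundOn (polyhedron M c (S.erase i) 0) (polyhedronResidual M c (S.erase i) 0) K) :
    HasErrorBoundOn (polyhedron M c S 0) (polyhedronResidual M c S 0) univ := by
  set L := linealitySpace M c S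
  obtain ⟨C, hC⟩ := hasErrorBoundOn_sphere_inter_orthogonal S IH
  refine ⟨C, fun x _ => ?_⟩
  obtain ⟨hMl, hcl⟩ := mem_linealitySpace.1 (L.starProjection_apply_mem x)
  rw [polyhedron_eq_vadd hMl hcl, infDist_vadd_set_eq_sub, polyhedronResidual_eq_sub hMl hcl]
  have hwL := L.sub_starProjection_mem_orthogonal x
  generalize x - L.starProjection x = w at hwL ⊢
  rcases eq_or_ne w 0 with hw0 | hw0
  · have h0 : (0 : E) ∈ polyhedron M c S 0 := ⟨map_zero M, fun i _ => (map_zero (c i)).ge⟩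
    rw [hw0, infDist_zero_of_mem h0, polyhedronResidual_eq_zero_iff.2 h0, mul_zero]
  have hw : 0 < ‖w‖ := norm_pos_iff.2 hw0
  have hu : ‖w‖⁻¹ • w ∈ sphere (0 : E) 1 ∩ Lᗮ :=
    ⟨by simp [norm_smul, hw.ne'], Lᗮ.smul_mem _ hwL⟩
  calc infDist w (polyhedron M c S 0)
        = ‖w‖ * infDist (‖w‖⁻¹ • w) (polyhedron M c S 0) := by
        rw [← infDist_smul_polyhedron_zero hw, smul_inv_smul₀ hw.ne']
    _ ≤ ‖w‖ * (C * polyhedronResidual M c S 0 (‖w‖⁻¹ • w)) :=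
        mul_le_mul_of_nonneg_left (hC _ hu) hw.le
    _ = C * polyhedronResidual M c S 0 w := by
        rw [polyhedronResidual_zero_smul (inv_nonneg.2 hw.le), mul_left_comm,
          mul_inv_cancel_left₀ hw.ne']

/-- **Hoffman's error bound** on compact sets, by induction on the number of inequality
constraints: locally the polyhedron either agrees with one having fewer constraints or, when all
constraints are active, with a translate of the homogeneous cone. -/
theorem hasErrorBoundOn_polyhedron (S : Finset ι) (y : G) {K : Set E} (hK : IsCompact K) :
    HasErrorBoundOn (polyhedron M c S y) (polyhedronResidual M c S y) K := by
  induction S using Finset.strongInduction generalizing y K with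
  | H S IH =>
  refine hK.hasErrorBoundOn (polyhedronResidual_nonneg S y) fun z _ => ?_
  rcases (polyhedronResidual_nonneg S y z).lt_or_eq with hpos | hzero
  · exact exists_hasErrorBoundOn_nhds_of_pos (continuous_polyhedronResidual S y) hpos
  have hzP := polyhedronResidual_eq_zero_iff.1 hzero.symm
  by_cases hinact : ∃ i ∈ S, 0 < c i z
  · obtain ⟨i, hi, hzi⟩ := hinact
    exact exists_hasErrorBoundOn_nhds_of_inactive hzP hzi
      (IH _ (Finset.erase_ssubset hi) y (isCompact_closedBall z 1))
  push Not at hinact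
  have hact : ∀ i ∈ S, c i z = 0 := fun i hi => le_antisymm (hinact i hi) (hzP.2 i hi)
  obtain ⟨C, hC⟩ := hasErrorBoundOn_univ_polyhedron_zero (M := M) (c := c) S
    fun i hi K hK => IH _ (Finset.erase_ssubset hi) 0 hK
  refine ⟨univ, univ_mem, C, fun x _ => ?_⟩
  rw [polyhedron_eq_vadd hzP.1 hact, infDist_vadd_set_eq_sub,
    polyhedronResidual_eq_sub hzP.1 hact]
  exact hC _ trivial

end Polyhedron

section ProximalGradient

variable {E F : Type*} [NormedAddCommGroup E] [InnerProductSpace ℝ E]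
  [NormedAddCommGroup F] [InnerProductSpace ℝ F]

lemma norm_sub_sq_eq_add_inner (T : E →ₗ[ℝ] F) (b : F) (q y : E) :
    ‖T y - b‖ ^ 2 = ‖T q - b‖ ^ 2 + 2 * ⟪T q - b, T (y - q)⟫_ℝ + ‖T (y - q)‖ ^ 2 := by
  rw [← norm_add_sq_real, map_sub]
  congr 2
  abel

/-- Compare `q` with `q + t • (y - q)` and let `t → 0⁺`. -/
lemma ConvexOn.sub_inner_le_of_forall_le {f : E → ℝ} (hf : ConvexOn ℝ univ f) (T : E →ₗ[ℝ] F)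
    (c : F) {q : E} (hq : ∀ y, f q + 1 / 2 * ‖T q - c‖ ^ 2 ≤ f y + 1 / 2 * ‖T y - c‖ ^ 2)
    (y : E) : f q - ⟪T q - c, T (y - q)⟫_ℝ ≤ f y := by
  set a := f y - f q + ⟪T q - c, T (y - q)⟫_ℝ
  have key : ∀ t ∈ Ioc (0 : ℝ) 1, 0 ≤ a + t * (1 / 2 * ‖T (y - q)‖ ^ 2) := by
    rintro t ⟨ht0, ht1⟩
    have hmin := hq (q + t • (y - q))
    have hconv : f (q + t • (y - q)) ≤ (1 - t) * f q + t * f y := by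
      have := hf.2 (mem_univ q) (mem_univ y) (sub_nonneg.2 ht1) ht0.le (sub_add_cancel 1 t)
      simpa [smul_sub, sub_smul, add_sub_assoc', add_comm, add_left_comm] using this
    rw [norm_sub_sq_eq_add_inner T c q (q + t • (y - q)), add_sub_cancel_left, map_smul,
      inner_smul_right, norm_smul, Real.norm_of_nonneg ht0.le] at hmin
    nlinarith
  have hlim : Tendsto (fun t : ℝ => a + t * (1 / 2 * ‖T (y - q)‖ ^ 2)) (𝓝[>] 0) (𝓝 a) :=
    (Continuous.tendsto' (by fun_prop) 0 a (by simp)).mono_left nhdsWithin_le_nhds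
  linarith [ge_of_tendsto hlim (eventually_of_mem (Ioc_mem_nhdsGT one_pos) key)]

variable (T : E →ₗ[ℝ] F) (b : F) (f : E → ℝ)

noncomputable def regularizedLeastSquares (y : E) : ℝ :=
  1 / 2 * ‖T y - b‖ ^ 2 + f y

variable {T b f}

lemma norm_le_of_regularizedLeastSquares_le {c : ℝ} (hc : 0 < c) (hfc : ∀ x, c * ‖x‖ ≤ f x)
    {ν : ℝ} {x : E} (hx : regularizedLeastSquares T b f x ≤ ν) : ‖x‖ ≤ ν / c := by
  rw [le_div_iff₀' hc]
  unfold regularizedLeastSquares at hx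
  nlinarith [hfc x, sq_nonneg ‖T x - b‖]

variable [FiniteDimensional ℝ E]

lemma exists_forall_regularizedLeastSquares_le (hf : Continuous f) {c : ℝ} (hc : 0 < c)
    (hfc : ∀ x, c * ‖x‖ ≤ f x) : ∃ x, ∀ y, regularizedLeastSquares T b f x ≤
      regularizedLeastSquares T b f y := by
  refine Continuous.exists_forall_le (by unfold regularizedLeastSquares; fun_prop) ?_
  refine tendsto_atTop_mono (fun x => ?_) ((tendsto_norm_cocompact_atTop).const_mul_atTop hc)
  unfold regularizedLeastSquares
  nlinarith [hfc x, sq_nonneg ‖T x - b‖]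

variable [FiniteDimensional ℝ F]

lemma IsProx.regularizedLeastSquares_add_inner_le (hf : ConvexOn ℝ univ f) {x p : E}
    (hp : IsProx f (x - T.adjoint (T x - b)) p) (y : E) :
    regularizedLeastSquares T b f p + ⟪(x - p) - T.adjoint (T (x - p)), y - p⟫_ℝ ≤
      regularizedLeastSquares T b f y := by
  have hopt := hf.sub_inner_le_of_forall_le LinearMap.id (x - T.adjoint (T x - b))
    (q := p) hp y
  have hv : (x - p) - T.adjoint (T (x - p)) =
      -(p - (x - T.adjoint (T x - b))) + T.adjoint (T p - b) := by
    simp only [map_sub]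
    abel
  rw [hv, inner_add_left, inner_neg_left, LinearMap.adjoint_inner_left]
  simp only [regularizedLeastSquares, LinearMap.id_apply] at hopt ⊢
  nlinarith [norm_sub_sq_eq_add_inner T b p y, sq_nonneg ‖T (y - p)‖]

lemma infDist_le_of_isProx (hf : ConvexOn ℝ univ f) {X : Set E} (hX : X.Nonempty) {m : ℝ}
    (hXm : ∀ y ∈ X, regularizedLeastSquares T b f y ≤ m) {x p : E}
    (hp : IsProx f (x - T.adjoint (T x - b)) p) {C : ℝ} (hC : 0 ≤ C)
    (hgrowth : infDist p X ^ 2 ≤ C * (regularizedLeastSquares T b f p - m)) :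
    infDist x X ≤
      (C * (1 + ‖(T.adjoint ∘ₗ T).toContinuousLinearMap‖) + 1) * ‖x - p‖ := by
  set K := ‖(T.adjoint ∘ₗ T).toContinuousLinearMap‖
  set v := (x - p) - T.adjoint (T (x - p))
  have hv : ‖v‖ ≤ (1 + K) * ‖x - p‖ := by
    have := (T.adjoint ∘ₗ T).toContinuousLinearMap.le_opNorm (x - p)
    simp only [LinearMap.coe_toContinuousLinearMap', LinearMap.comp_apply] at this
    linarith [norm_sub_le (x - p) (T.adjoint (T (x - p)))]
  have hp_dist : infDist p X ≤ C * ((1 + K) * ‖x - p‖) := by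
    refine infDist_le_mul_of_sq_le hX hC (by positivity) hgrowth fun y hy => ?_
    have hsub := hp.regularizedLeastSquares_add_inner_le hf y
    have hcs : -⟪v, y - p⟫_ℝ ≤ ‖v‖ * dist p y := by
      rw [dist_comm, dist_eq_norm]
      exact (neg_le_abs _).trans (abs_real_inner_le_norm v (y - p))
    nlinarith [hXm y hy, mul_le_mul_of_nonneg_right hv (dist_nonneg (x := p) (y := y))]
  calc infDist x X ≤ infDist p X + dist x p := infDist_le_infDist_add_dist
    _ ≤ C * ((1 + K) * ‖x - p‖) + ‖x - p‖ := by rw [dist_eq_norm]; linarith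
    _ = (C * (1 + K) + 1) * ‖x - p‖ := by ring

theorem exists_errorBound_of_quadraticGrowth (hf : ConvexOn ℝ univ f) {X : Set E}
    (hX : X.Nonempty) {m : ℝ} (hXm : ∀ y ∈ X, regularizedLeastSquares T b f y ≤ m)
    (hgrowth : ∀ R, ∃ C, 0 ≤ C ∧ ∀ y, ‖y‖ ≤ R →
      infDist y X ^ 2 ≤ C * (regularizedLeastSquares T b f y - m))
    {p : E → E} (hp : ∀ x, IsProx f (x - T.adjoint (T x - b)) (p x)) {ν R : ℝ}
    (hR : ∀ x, regularizedLeastSquares T b f x ≤ ν → ‖x‖ ≤ R) :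
    ∃ δ > (0 : ℝ), ∃ τ > (0 : ℝ), ∀ x, regularizedLeastSquares T b f x ≤ ν →
      ‖x - p x‖ ≤ δ → infDist x X ≤ τ * ‖x - p x‖ := by
  obtain ⟨C, hC, hCgrowth⟩ := hgrowth (R + 1)
  refine ⟨1, one_pos, _, add_pos_of_nonneg_of_pos (mul_nonneg hC (by positivity)) one_pos,
    fun x hx hδ => infDist_le_of_isProx hf hX hXm (hp x) hC (hCgrowth _ ?_)⟩
  calc ‖p x‖ ≤ ‖x‖ + ‖x - p x‖ := by simpa using norm_sub_le x (x - p x)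
    _ ≤ R + 1 := add_le_add (hR x hx) hδ

end ProximalGradient

section Ray

variable {V : Type*} [NormedAddCommGroup V] [InnerProductSpace ℝ V]

/-- The direction of the ray `{z | w ‖z‖ + ⟪a, z⟫ = 0}` when `‖a‖ = w`; otherwise that set is
`{0}` and the direction is `0`. -/
noncomputable def rayDir (a : V) (w : ℝ) : V :=
  if ‖a‖ = w then -(w⁻¹ • a) else 0

noncomputable def rayResidual (u z : V) : ℝ :=
  ‖z - ⟪u, z⟫_ℝ • u‖ + max 0 (-⟪u, z⟫_ℝ)

lemma mul_norm_add_inner_nonneg {a : V} {w : ℝ} (ha : ‖a‖ ≤ w) (z : V) :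
    0 ≤ w * ‖z‖ + ⟪a, z⟫_ℝ := by
  nlinarith [neg_abs_le ⟪a, z⟫_ℝ, abs_real_inner_le_norm a z, norm_nonneg z]

lemma norm_rayDir {a : V} {w : ℝ} (hw : 0 < w) (haw : ‖a‖ = w) : ‖rayDir a w‖ = 1 := by
  simp [rayDir, norm_smul, haw, hw.ne', abs_of_pos hw]

lemma smul_rayDir {a : V} {w : ℝ} (hw : 0 < w) (haw : ‖a‖ = w) : w • rayDir a w = -a := by
  simp [rayDir, haw, smul_smul, hw.ne']

lemma inner_eq_neg_mul_inner_rayDir {a : V} {w : ℝ} (hw : 0 < w) (haw : ‖a‖ = w) (z : V) :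
    ⟪a, z⟫_ℝ = -(w * ⟪rayDir a w, z⟫_ℝ) := by
  rw [← real_inner_smul_left, smul_rayDir hw haw, inner_neg_left, neg_neg]

lemma mul_norm_add_inner_eq_zero {a : V} {w : ℝ} (hw : 0 < w) {z : V}
    (hz : z - ⟪rayDir a w, z⟫_ℝ • rayDir a w = 0) (hs : 0 ≤ ⟪rayDir a w, z⟫_ℝ) :
    w * ‖z‖ + ⟪a, z⟫_ℝ = 0 := by
  rw [sub_eq_zero] at hz
  by_cases haw : ‖a‖ = w
  · have hnorm : ‖z‖ = ⟪rayDir a w, z⟫_ℝ := by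
      calc ‖z‖ = ‖⟪rayDir a w, z⟫_ℝ • rayDir a w‖ := congrArg _ hz
        _ = ⟪rayDir a w, z⟫_ℝ := by
          rw [norm_smul, norm_rayDir hw haw, mul_one, Real.norm_of_nonneg hs]
    rw [hnorm, inner_eq_neg_mul_inner_rayDir hw haw]
    ring
  · rw [hz]
    simp [rayDir, if_neg haw]

lemma sq_rayResidual_le_of_norm_eq_one {u : V} (hu : ‖u‖ = 1) {z : V} {R : ℝ} (hz : ‖z‖ ≤ R) :
    rayResidual u z ^ 2 ≤ 2 * R * (‖z‖ - ⟪u, z⟫_ℝ) := by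
  have hperp : ‖z - ⟪u, z⟫_ℝ • u‖ ^ 2 = ‖z‖ ^ 2 - ⟪u, z⟫_ℝ ^ 2 := by
    rw [norm_sub_sq_real, real_inner_smul_right, norm_smul, real_inner_comm z u, hu, mul_one,
      Real.norm_eq_abs, sq_abs]
    ring
  set s := ⟪u, z⟫_ℝ
  have hs : |s| ≤ ‖z‖ := by simpa [hu] using abs_real_inner_le_norm u z
  have hs' := abs_le.1 hs
  rw [rayResidual]
  rcases le_or_gt 0 s with h | h
  · rw [max_eq_left (neg_nonpos.2 h), add_zero, hperp]
    nlinarith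
  · rw [max_eq_right (by linarith)]
    nlinarith [sq_nonneg (‖z - s • u‖ + s), norm_nonneg (z - s • u)]

lemma exists_sq_rayResidual_le {a : V} {w : ℝ} (hw : 0 < w) (ha : ‖a‖ ≤ w) {R : ℝ}
    (hR : 0 ≤ R) : ∃ κ, 0 ≤ κ ∧ ∀ z : V, ‖z‖ ≤ R →
      rayResidual (rayDir a w) z ^ 2 ≤ κ * (w * ‖z‖ + ⟪a, z⟫_ℝ) := by
  by_cases haw : ‖a‖ = w
  · refine ⟨2 * R / w, by positivity, fun z hz => ?_⟩
    rw [inner_eq_neg_mul_inner_rayDir hw haw, div_mul_eq_mul_div, le_div_iff₀ hw]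
    nlinarith [sq_rayResidual_le_of_norm_eq_one (norm_rayDir hw haw) hz]
  · have hlt : ‖a‖ < w := lt_of_le_of_ne ha haw
    refine ⟨R / (w - ‖a‖), div_nonneg hR (by linarith), fun z hz => ?_⟩
    have hres : rayResidual (rayDir a w) z = ‖z‖ := by simp [rayResidual, rayDir, if_neg haw]
    have hlow : (w - ‖a‖) * ‖z‖ ≤ w * ‖z‖ + ⟪a, z⟫_ℝ := by
      nlinarith [neg_abs_le ⟪a, z⟫_ℝ, abs_real_inner_le_norm a z]
    rw [hres, div_mul_eq_mul_div, le_div_iff₀ (by linarith)]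
    nlinarith [mul_le_mul_of_nonneg_left hlow hR,
      mul_le_mul_of_nonneg_right hz (mul_nonneg (norm_nonneg z) (sub_nonneg.2 ha))]

lemma mul_norm_add_inner_eq_zero_iff {a : V} {w : ℝ} (hw : 0 < w) (ha : ‖a‖ ≤ w) {z : V} :
    w * ‖z‖ + ⟪a, z⟫_ℝ = 0 ↔
      z - ⟪rayDir a w, z⟫_ℝ • rayDir a w = 0 ∧ 0 ≤ ⟪rayDir a w, z⟫_ℝ := by
  refine ⟨fun h => ?_, fun h => mul_norm_add_inner_eq_zero hw h.1 h.2⟩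
  obtain ⟨κ, -, hκ⟩ := exists_sq_rayResidual_le hw ha (norm_nonneg z)
  have hres := hκ z le_rfl
  rw [h, mul_zero] at hres
  have h0 : rayResidual (rayDir a w) z = 0 := pow_eq_zero_iff two_ne_zero |>.1
    (le_antisymm hres (sq_nonneg _))
  rw [rayResidual, add_eq_zero_iff_of_nonneg (norm_nonneg _) (le_max_left _ _), norm_eq_zero,
    max_eq_left_iff, neg_nonpos] at h0
  exact h0

end Ray

section GroupProjection

variable {n : ℕ}

def groupProj (J : Finset (Fin n)) : EuclideanSpace ℝ (Fin n) →ₗ[ℝ] EuclideanSpace ℝ (Fin n) where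
  toFun x := WithLp.toLp 2 fun i => if i ∈ J then x i else 0
  map_add' x y := by
    ext i
    by_cases h : i ∈ J <;> simp [h]
  map_smul' c x := by
    ext i
    by_cases h : i ∈ J <;> simp [h]

@[simp]
lemma groupProj_apply (J : Finset (Fin n)) (x : EuclideanSpace ℝ (Fin n)) (i : Fin n) :
    groupProj J x i = if i ∈ J then x i else 0 := rfl

lemma norm_groupProj (J : Finset (Fin n)) (x : EuclideanSpace ℝ (Fin n)) :
    ‖groupProj J x‖ = √(∑ i ∈ J, x i ^ 2) := by
  rw [EuclideanSpace.norm_eq, ← Finset.sum_subset (Finset.subset_univ J) fun i _ hi => by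
    simp [hi]]
  exact congrArg _ (Finset.sum_congr rfl fun i hi => by simp [hi])

lemma norm_groupProj_le (J : Finset (Fin n)) (x : EuclideanSpace ℝ (Fin n)) :
    ‖groupProj J x‖ ≤ ‖x‖ := by
  rw [EuclideanSpace.norm_eq, EuclideanSpace.norm_eq]
  refine Real.sqrt_le_sqrt (Finset.sum_le_sum fun i _ => ?_)
  by_cases hi : i ∈ J <;> simp [hi, sq_nonneg]

lemma groupProj_groupProj (J : Finset (Fin n)) (x : EuclideanSpace ℝ (Fin n)) :
    groupProj J (groupProj J x) = groupProj J x := by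
  ext i
  by_cases hi : i ∈ J <;> simp [hi]

lemma inner_groupProj_right (J : Finset (Fin n)) (x y : EuclideanSpace ℝ (Fin n)) :
    ⟪x, groupProj J y⟫_ℝ = ⟪groupProj J x, groupProj J y⟫_ℝ := by
  simp only [PiLp.inner_apply, groupProj_apply]
  exact Finset.sum_congr rfl fun i _ => by by_cases hi : i ∈ J <;> simp [hi]

variable {ι : Type*} {grp : ι → Finset (Fin n)}

lemma groupProj_groupProj_of_ne (hgrp : ∀ i, ∃! k, i ∈ grp k) {k l : ι} (hkl : k ≠ l)
    (x : EuclideanSpace ℝ (Fin n)) : groupProj (grp k) (groupProj (grp l) x) = 0 := by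
  ext i
  by_cases hk : i ∈ grp k
  · have hl : i ∉ grp l := fun hl => hkl ((hgrp i).unique hk hl)
    simp [hk, hl]
  · simp [hk]

lemma sum_groupProj [Fintype ι] (hgrp : ∀ i, ∃! k, i ∈ grp k) (x : EuclideanSpace ℝ (Fin n)) :
    ∑ k, groupProj (grp k) x = x := by
  ext i
  obtain ⟨k, hk, hk'⟩ := hgrp i
  rw [WithLp.ofLp_sum, Finset.sum_apply, Finset.sum_eq_single k]
  · simp [hk]
  · intro l _ hlk
    simp [show i ∉ grp l from fun hl => hlk (hk' l hl)]
  · simp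

lemma inner_eq_sum_inner_groupProj [Fintype ι] (hgrp : ∀ i, ∃! k, i ∈ grp k)
    (g x : EuclideanSpace ℝ (Fin n)) :
    ⟪g, x⟫_ℝ = ∑ k, ⟪groupProj (grp k) g, groupProj (grp k) x⟫_ℝ := by
  conv_lhs => rw [← sum_groupProj hgrp x]
  rw [inner_sum]
  exact Finset.sum_congr rfl fun k _ => inner_groupProj_right _ _ _

end GroupProjection

section GroupNorm

variable {n : ℕ} {ι : Type*} [Fintype ι]

noncomputable def groupNorm (grp : ι → Finset (Fin n)) (w : ι → ℝ)
    (x : EuclideanSpace ℝ (Fin n)) : ℝ :=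
  ∑ k, w k * ‖groupProj (grp k) x‖

variable {grp : ι → Finset (Fin n)} {w : ι → ℝ}

lemma convexOn_groupNorm (hw : ∀ k, 0 ≤ w k) : ConvexOn ℝ univ (groupNorm grp w) := by
  have hk : ∀ k, ConvexOn ℝ univ fun x => w k * ‖groupProj (grp k) x‖ := fun k =>
    ((convexOn_norm convex_univ).comp_linearMap (groupProj (grp k))).smul (hw k)
  refine ⟨convex_univ, fun x _ y _ a b ha hb hab => ?_⟩
  simp only [groupNorm, smul_eq_mul, Finset.mul_sum, ← Finset.sum_add_distrib]
  exact Finset.sum_le_sum fun k _ => (hk k).2 (mem_univ x) (mem_univ y) ha hb hab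

lemma continuous_groupNorm : Continuous (groupNorm grp w) :=
  continuous_finsetSum _ fun k _ =>
    continuous_const.mul (groupProj (grp k)).continuous_of_finiteDimensional.norm

lemma groupNorm_smul {t : ℝ} (ht : 0 ≤ t) (x : EuclideanSpace ℝ (Fin n)) :
    groupNorm grp w (t • x) = t * groupNorm grp w x := by
  simp only [groupNorm, map_smul, norm_smul, Real.norm_of_nonneg ht, Finset.mul_sum]
  exact Finset.sum_congr rfl fun k _ => by ring

lemma groupNorm_groupProj [DecidableEq ι] (hgrp : ∀ i, ∃! k, i ∈ grp k) (k : ι)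
    (x : EuclideanSpace ℝ (Fin n)) :
    groupNorm grp w (groupProj (grp k) x) = w k * ‖groupProj (grp k) x‖ := by
  rw [groupNorm, Finset.sum_eq_single k (fun l _ hlk => by
    rw [groupProj_groupProj_of_ne hgrp hlk, norm_zero, mul_zero]) (by simp),
    groupProj_groupProj]

lemma exists_pos_mul_norm_le_groupNorm (hgrp : ∀ i, ∃! k, i ∈ grp k) (hw : ∀ k, 0 < w k) :
    ∃ c > 0, ∀ x, c * ‖x‖ ≤ groupNorm grp w x := by
  obtain ⟨c, hc, hcw⟩ : ∃ c > 0, ∀ k, c ≤ w k := by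
    rcases isEmpty_or_nonempty ι with hι | hι
    · exact ⟨1, one_pos, fun k => isEmptyElim k⟩
    · obtain ⟨k₀, hk₀⟩ := Finite.exists_min w
      exact ⟨w k₀, hw k₀, hk₀⟩
  refine ⟨c, hc, fun x => ?_⟩
  calc c * ‖x‖ = c * ‖∑ k, groupProj (grp k) x‖ := by rw [sum_groupProj hgrp]
    _ ≤ c * ∑ k, ‖groupProj (grp k) x‖ := mul_le_mul_of_nonneg_left (norm_sum_le _ _) hc.le
    _ ≤ groupNorm grp w x := by
      rw [Finset.mul_sum]
      exact Finset.sum_le_sum fun k _ => mul_le_mul_of_nonneg_right (hcw k) (norm_nonneg _)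

lemma norm_groupProj_le_of_forall_nonneg [DecidableEq ι] (hgrp : ∀ i, ∃! k, i ∈ grp k)
    (hw : ∀ k, 0 ≤ w k) {g : EuclideanSpace ℝ (Fin n)}
    (hg : ∀ y, 0 ≤ groupNorm grp w y + ⟪g, y⟫_ℝ) (k : ι) : ‖groupProj (grp k) g‖ ≤ w k := by
  have h := hg (groupProj (grp k) (-g))
  rw [groupNorm_groupProj hgrp, inner_groupProj_right, map_neg, norm_neg,
    inner_neg_right, real_inner_self_eq_norm_sq] at h
  nlinarith [hw k, norm_nonneg (groupProj (grp k) g)]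

end GroupNorm

lemma sq_add_sum_le_mul {ι : Type*} (s : Finset ι) (a : ℝ) {ρ κ h : ι → ℝ}
    (hκ : ∀ k ∈ s, 0 ≤ κ k) (hh : ∀ k ∈ s, 0 ≤ h k) (hρ : ∀ k ∈ s, ρ k ^ 2 ≤ κ k * h k) :
    (a + ∑ k ∈ s, ρ k) ^ 2 ≤ (4 + 2 * #s * ∑ k ∈ s, κ k) * (1 / 2 * a ^ 2 + ∑ k ∈ s, h k) := by
  have hsum : ∑ k ∈ s, ρ k ^ 2 ≤ (∑ k ∈ s, κ k) * ∑ k ∈ s, h k := by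
    rw [Finset.mul_sum]
    refine Finset.sum_le_sum fun k hk => (hρ k hk).trans ?_
    exact mul_le_mul_of_nonneg_right (Finset.single_le_sum hκ hk) (hh k hk)
  have hK : 0 ≤ ∑ k ∈ s, κ k := Finset.sum_nonneg hκ
  have hH : 0 ≤ ∑ k ∈ s, h k := Finset.sum_nonneg hh
  have hN : (0 : ℝ) ≤ #s := Nat.cast_nonneg _
  have hCS := sq_sum_le_card_mul_sum_sq (s := s) (f := ρ)
  nlinarith [sq_nonneg (a - ∑ k ∈ s, ρ k), mul_le_mul_of_nonneg_left hsum hN,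
    mul_nonneg (mul_nonneg hN hK) hH, mul_nonneg (mul_nonneg hN hK) (sq_nonneg a)]

section GroupLasso

variable {n : ℕ} {ι : Type*} [Fintype ι] {grp : ι → Finset (Fin n)} {w : ι → ℝ}
  {F : Type*} [NormedAddCommGroup F] [InnerProductSpace ℝ F]
  {T : EuclideanSpace ℝ (Fin n) →ₗ[ℝ] F} {b : F}

variable (T grp) in
/-- The linear equations `T x = T a` and `x_k ∈ ℝ u_k` (for each group `k`) of the polyhedral
description of the solution set; the sign conditions are `groupConeForm`. -/
noncomputable def groupConeMap (u : ι → EuclideanSpace ℝ (Fin n)) :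
    EuclideanSpace ℝ (Fin n) →ₗ[ℝ] F × (ι → EuclideanSpace ℝ (Fin n)) :=
  T.prod <| LinearMap.pi fun k =>
    groupProj (grp k) - (innerₛₗ ℝ (u k) ∘ₗ groupProj (grp k)).smulRight (u k)

variable (grp) in
noncomputable def groupConeForm (u : ι → EuclideanSpace ℝ (Fin n)) (k : ι) :
    EuclideanSpace ℝ (Fin n) →ₗ[ℝ] ℝ :=
  innerₛₗ ℝ (u k) ∘ₗ groupProj (grp k)

lemma mem_polyhedron_groupCone {u : ι → EuclideanSpace ℝ (Fin n)}
    {a x : EuclideanSpace ℝ (Fin n)} :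
    x ∈ polyhedron (groupConeMap grp T u) (groupConeForm grp u) univ (T a, 0) ↔
      T x = T a ∧ ∀ k, groupProj (grp k) x - ⟪u k, groupProj (grp k) x⟫_ℝ • u k = 0 ∧
        0 ≤ ⟪u k, groupProj (grp k) x⟫_ℝ := by
  simp [polyhedron, groupConeMap, groupConeForm, funext_iff, forall_and, and_assoc]

lemma polyhedronResidual_groupCone_le (u : ι → EuclideanSpace ℝ (Fin n))
    (a x : EuclideanSpace ℝ (Fin n)) :
    polyhedronResidual (groupConeMap grp T u) (groupConeForm grp u) univ (T a, 0) x ≤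
      ‖T x - T a‖ + ∑ k, rayResidual (u k) (groupProj (grp k) x) := by
  set β := fun k => groupProj (grp k) x - ⟪u k, groupProj (grp k) x⟫_ℝ • u k
  have hβ : 0 ≤ ∑ k, ‖β k‖ := Finset.sum_nonneg fun k _ => norm_nonneg _
  have hM : ‖groupConeMap grp T u x - (T a, 0)‖ ≤ ‖T x - T a‖ + ∑ k, ‖β k‖ := by
    refine norm_prod_le_iff.2 ⟨?_, (pi_norm_le_iff_of_nonneg (by positivity)).2 fun k => ?_⟩
    · simpa [groupConeMap] using hβ
    · simpa [groupConeMap, β] using le_add_of_nonneg_of_le (norm_nonneg _)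
        (Finset.single_le_sum (fun k _ => norm_nonneg (β k)) (Finset.mem_univ k))
  simp only [polyhedronResidual, rayResidual, Finset.sum_add_distrib]
  simp only [groupConeForm, LinearMap.comp_apply, innerₛₗ_apply_apply]
  linarith

variable [FiniteDimensional ℝ F]

/-- Since `groupNorm` is positively homogeneous, the subgradient inequality for
`-T†(T xb - b)` at the minimizer `xb` splits into these two facts. -/
lemma groupNorm_add_inner_of_forall_le (hw : ∀ k, 0 ≤ w k) {xb : EuclideanSpace ℝ (Fin n)}
    (hxb : ∀ y, regularizedLeastSquares T b (groupNorm grp w) xb ≤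
      regularizedLeastSquares T b (groupNorm grp w) y) :
    (∀ y, 0 ≤ groupNorm grp w y + ⟪T.adjoint (T xb - b), y⟫_ℝ) ∧
      groupNorm grp w xb + ⟪T.adjoint (T xb - b), xb⟫_ℝ = 0 := by
  have hsub : ∀ y,
      groupNorm grp w xb - ⟪T.adjoint (T xb - b), y - xb⟫_ℝ ≤ groupNorm grp w y := by
    intro y
    have := (convexOn_groupNorm (grp := grp) hw).sub_inner_le_of_forall_le T b (q := xb)
      (fun y => by have := hxb y; unfold regularizedLeastSquares at this; linarith) y
    rwa [← LinearMap.adjoint_inner_left] at this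
  have h0 := hsub 0
  have h2 := hsub ((2 : ℝ) • xb)
  rw [show (0 : EuclideanSpace ℝ (Fin n)) = (0 : ℝ) • 0 from (zero_smul ℝ 0).symm,
    groupNorm_smul le_rfl, zero_smul, zero_sub, inner_neg_right] at h0
  rw [groupNorm_smul zero_le_two, two_smul, add_sub_cancel_right] at h2
  refine ⟨fun y => ?_, by linarith⟩
  have := hsub y
  rw [inner_sub_right] at this
  linarith

lemma regularizedLeastSquares_groupNorm_sub (hgrp : ∀ i, ∃! k, i ∈ grp k)
    {xb : EuclideanSpace ℝ (Fin n)} (hxb : groupNorm grp w xb + ⟪T.adjoint (T xb - b), xb⟫_ℝ = 0)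
    (y : EuclideanSpace ℝ (Fin n)) :
    regularizedLeastSquares T b (groupNorm grp w) y -
        regularizedLeastSquares T b (groupNorm grp w) xb =
      1 / 2 * ‖T y - T xb‖ ^ 2 + ∑ k, (w k * ‖groupProj (grp k) y‖ +
        ⟪groupProj (grp k) (T.adjoint (T xb - b)), groupProj (grp k) y⟫_ℝ) := by
  have hsq := norm_sub_sq_eq_add_inner T b xb y
  rw [← LinearMap.adjoint_inner_left, inner_sub_right] at hsq
  rw [Finset.sum_add_distrib, ← inner_eq_sum_inner_groupProj hgrp, ← map_sub]
  unfold regularizedLeastSquares groupNorm at *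
  linarith

theorem groupLasso_minimizers_eq_polyhedron [DecidableEq ι] (hgrp : ∀ i, ∃! k, i ∈ grp k)
    (hw : ∀ k, 0 < w k) {xb : EuclideanSpace ℝ (Fin n)}
    (hxb : ∀ y, regularizedLeastSquares T b (groupNorm grp w) xb ≤
      regularizedLeastSquares T b (groupNorm grp w) y) :
    {x | ∀ y, regularizedLeastSquares T b (groupNorm grp w) x ≤
        regularizedLeastSquares T b (groupNorm grp w) y} =
      polyhedron
        (groupConeMap grp T fun k => rayDir (groupProj (grp k) (T.adjoint (T xb - b))) (w k))
        (groupConeForm grp fun k => rayDir (groupProj (grp k) (T.adjoint (T xb - b))) (w k))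
        univ (T xb, 0) := by
  obtain ⟨hg, hxb0⟩ := groupNorm_add_inner_of_forall_le (fun k => (hw k).le) hxb
  have hgk := norm_groupProj_le_of_forall_nonneg hgrp (fun k => (hw k).le) hg
  have hh : ∀ k y, 0 ≤ w k * ‖groupProj (grp k) y‖ +
      ⟪groupProj (grp k) (T.adjoint (T xb - b)), groupProj (grp k) y⟫_ℝ :=
    fun k y => mul_norm_add_inner_nonneg (hgk k) _
  ext x
  rw [mem_polyhedron_groupCone]
  simp only [← mul_norm_add_inner_eq_zero_iff (hw _) (hgk _)]
  have hid := regularizedLeastSquares_groupNorm_sub hgrp hxb0 x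
  have hsum := Finset.sum_nonneg fun k (_ : k ∈ Finset.univ) => hh k x
  have hgap : (∀ y, regularizedLeastSquares T b (groupNorm grp w) x ≤
      regularizedLeastSquares T b (groupNorm grp w) y) ↔
      1 / 2 * ‖T x - T xb‖ ^ 2 + ∑ k, (w k * ‖groupProj (grp k) x‖ +
        ⟪groupProj (grp k) (T.adjoint (T xb - b)), groupProj (grp k) x⟫_ℝ) = 0 :=
    ⟨fun hx => by nlinarith [hx xb], fun h0 y => by linarith [hxb y]⟩
  rw [mem_ofPred_eq, hgap, add_eq_zero_iff_of_nonneg (by positivity) hsum,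
    Finset.sum_eq_zero_iff_of_nonneg fun k _ => hh k x]
  simp [sub_eq_zero]

/-- Hoffman's bound for the polyhedral solution set, with each group's residual controlled by
that group's share of the gap `F y - F xb`. -/
theorem groupLasso_quadraticGrowth (hgrp : ∀ i, ∃! k, i ∈ grp k) (hw : ∀ k, 0 < w k)
    {xb : EuclideanSpace ℝ (Fin n)}
    (hxb : ∀ y, regularizedLeastSquares T b (groupNorm grp w) xb ≤
      regularizedLeastSquares T b (groupNorm grp w) y) (R : ℝ) :
    ∃ C, 0 ≤ C ∧ ∀ y, ‖y‖ ≤ R →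
      infDist y {x | ∀ z, regularizedLeastSquares T b (groupNorm grp w) x ≤
        regularizedLeastSquares T b (groupNorm grp w) z} ^ 2 ≤
      C * (regularizedLeastSquares T b (groupNorm grp w) y -
        regularizedLeastSquares T b (groupNorm grp w) xb) := by
  classical
  set g := T.adjoint (T xb - b)
  obtain ⟨hg, hxb0⟩ := groupNorm_add_inner_of_forall_le (fun k => (hw k).le) hxb
  have hgk := norm_groupProj_le_of_forall_nonneg hgrp (fun k => (hw k).le) hg
  choose κ hκ0 hκ using fun k => exists_sq_rayResidual_le (hw k) (hgk k) (le_max_right R 0)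
  set u := fun k => rayDir (groupProj (grp k) g) (w k)
  obtain ⟨C, hC⟩ := hasErrorBoundOn_polyhedron (M := groupConeMap grp T u)
    (c := groupConeForm grp u) Finset.univ (T xb, 0) (isCompact_closedBall 0 (max R 0))
  have hK : 0 ≤ 4 + 2 * #(Finset.univ : Finset ι) * ∑ k, κ k := by
    have := Finset.sum_nonneg fun k (_ : k ∈ Finset.univ) => hκ0 k
    positivity
  refine ⟨C ^ 2 * (4 + 2 * #(Finset.univ : Finset ι) * ∑ k, κ k), by positivity,
    fun y hy => ?_⟩
  have hyR : ‖y‖ ≤ max R 0 := hy.trans (le_max_left _ _)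
  rw [groupLasso_minimizers_eq_polyhedron hgrp hw hxb,
    regularizedLeastSquares_groupNorm_sub hgrp hxb0]
  have hd := hC y (mem_closedBall_zero_iff.2 hyR)
  calc _ ≤ (C * polyhedronResidual (groupConeMap grp T u) (groupConeForm grp u) Finset.univ
        (T xb, 0) y) ^ 2 := pow_le_pow_left₀ infDist_nonneg hd 2
    _ ≤ C ^ 2 * (‖T y - T xb‖ + ∑ k, rayResidual (u k) (groupProj (grp k) y)) ^ 2 := by
        rw [mul_pow]
        exact mul_le_mul_of_nonneg_left (pow_le_pow_left₀ (polyhedronResidual_nonneg _ _ _)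
          (polyhedronResidual_groupCone_le u xb y) 2) (sq_nonneg C)
    _ ≤ _ := by
        rw [mul_assoc]
        refine mul_le_mul_of_nonneg_left (sq_add_sum_le_mul _ _ (fun k _ => hκ0 k)
          (fun k _ => mul_norm_add_inner_nonneg (hgk k) _)
          fun k _ => hκ k _ ((norm_groupProj_le _ _).trans hyR)) (sq_nonneg C)

end GroupLasso

/-- Local error bound for the group LASSO problem
`min (1/2)‖Ax − b‖² + Σ_J w_J ‖x_J‖₂`.  Here `p z = prox_{f₁}(z − Aᵀ(Az − b))`. -/
theorem error_bound_group_lasso {n m : ℕ}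
    (𝒥 : Finset (Finset (Fin n))) (h𝒥 : ∀ i : Fin n, ∃! J, J ∈ 𝒥 ∧ i ∈ J)
    (w : Finset (Fin n) → ℝ) (hw : ∀ J ∈ 𝒥, 0 < w J)
    (A : Matrix (Fin m) (Fin n) ℝ) (b : EuclideanSpace ℝ (Fin m))
    (f₁ : EuclideanSpace ℝ (Fin n) → ℝ)
    (hf₁ : ∀ x, f₁ x = ∑ J ∈ 𝒥, w J * Real.sqrt (∑ i ∈ J, (x i) ^ 2))
    (F : EuclideanSpace ℝ (Fin n) → ℝ)
    (hF : ∀ x, F x = (1 / 2) * ‖Matrix.toEuclideanLin A x - b‖ ^ 2 + f₁ x)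
    (p : EuclideanSpace ℝ (Fin n) → EuclideanSpace ℝ (Fin n))
    (hp : ∀ z, IsProx f₁
      (z - Matrix.toEuclideanLin Aᵀ (Matrix.toEuclideanLin A z - b)) (p z))
    (Xstar : Set (EuclideanSpace ℝ (Fin n)))
    (hXstar : Xstar = {y | ∀ z, F y ≤ F z}) :
    ∀ ν : ℝ, sInf (Set.range F) ≤ ν → ∃ δ > (0 : ℝ), ∃ τ > (0 : ℝ),
      ∀ x : EuclideanSpace ℝ (Fin n), F x ≤ ν → ‖x - p x‖ ≤ δ →
        Metric.infDist x (closure Xstar) ≤ τ * ‖x - p x‖ := by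
  intro ν _
  have hgrp : ∀ i, ∃! J : 𝒥, i ∈ (J : Finset (Fin n)) := fun i => by
    obtain ⟨J, ⟨hJ, hiJ⟩, huniq⟩ := h𝒥 i
    exact ⟨⟨J, hJ⟩, hiJ, fun K hK => Subtype.ext (huniq K ⟨K.2, hK⟩)⟩
  have hw' : ∀ J : 𝒥, 0 < w J := fun J => hw J J.2
  obtain rfl : f₁ = groupNorm Subtype.val fun J : 𝒥 => w J := funext fun x => by
    rw [hf₁, groupNorm, ← Finset.sum_coe_sort 𝒥]
    simp only [norm_groupProj]
  obtain rfl : F = regularizedLeastSquares (toEuclideanLin A) b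
      (groupNorm Subtype.val fun J : 𝒥 => w J) := funext hF
  rw [← conjTranspose_eq_transpose_of_trivial, toEuclideanLin_conjTranspose_eq_adjoint] at hp
  obtain ⟨c, hc, hcoer⟩ := exists_pos_mul_norm_le_groupNorm hgrp hw'
  obtain ⟨xb, hxb⟩ := exists_forall_regularizedLeastSquares_le (T := toEuclideanLin A) (b := b)
    continuous_groupNorm hc hcoer
  subst hXstar
  simp only [infDist_closure]
  refine exists_errorBound_of_quadraticGrowth (convexOn_groupNorm fun J => (hw' J).le) ?_ ?_
    (groupLasso_quadraticGrowth hgrp hw' hxb) hp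
    fun x hx => norm_le_of_regularizedLeastSquares_le hc hcoer hx
  · exact ⟨xb, hxb⟩
  · exact fun y hy => hy xb
end

section
/- Let ℝⁿ be decomposed into K coordinate blocks, x = (x_1,…,x_K) with x_k ∈ ℝ^{n_k}. Let f₁(x) = Σ_{k=1}^K d_k(x_k) with each d_k : ℝ^{n_k} → ℝ convex, and let f₂ : ℝⁿ → ℝ be convex and differentiable with L-Lipschitz continuous gradient and block coordinate-wise strongly convex with modulus γ > 0; set F = f₁ + f₂. Let (x^r) be generated by the block coordinate descent method with cyclic updates: at iteration r = sK + k (1 ≤ k ≤ K), x_k^{r+1} exactly minimizes F over the k-th block with the other blocks fixed at their current values, and x_j^{r+1} = x_j^r for j ≠ k. Then for every cycle s there exists a vector e^s ∈ ℝⁿ such that x^{(s+1)K} = prox_{f₁}( x^{sK} − ∇f₂(x^{sK}) + e^s ) and ‖e^s‖ ≤ K(L+1)·‖x^{(s+1)K} − x^{sK}‖; that is, BCD is an APS method with stepsize 1 and error constant κ = K(L+1). -/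
/-!
Let `x⁺ = x^{(s+1)K}`. Within cycle `s`, block `k` is last changed at step `sK + k`, where it
minimises `d_k + f₂` over that block. The first-order condition of this convex-plus-smooth
problem, `d_k(x⁺_k) ≤ d_k(y) + ⟪G_k, y - x⁺_k⟫` with `G_k = ∇_k f₂(x^{sK+k+1})`, says exactly that
`x⁺ = prox_{f₁}(x⁺ - G)`, so `e = (x⁺ - x^{sK}) + (∇f₂(x^{sK}) - G)`. Every intermediate iterate
agrees block by block with `x⁺` or with `x^{sK}`, hence lies within `‖x⁺ - x^{sK}‖` of `x^{sK}`,
and the Lipschitz gradient bounds each block of `∇f₂(x^{sK}) - G` by `L‖x⁺ - x^{sK}‖`.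
-/

open Set Finset RealInnerProductSpace

theorem ConvexOn.le_add_apply_sub_of_forall_add_le {E : Type*} [NormedAddCommGroup E]
    [NormedSpace ℝ E] {φ ψ : E → ℝ} {ℓ : E →L[ℝ] ℝ} {p : E} (hφ : ConvexOn ℝ univ φ)
    (hψ : HasFDerivAt ψ ℓ p) (hmin : ∀ z, φ p + ψ p ≤ φ z + ψ z) (y : E) :
    φ p ≤ φ y + ℓ (y - p) := by
  set c := φ y - φ p
  -- Convexity of `φ` on the segment `[p, y]` makes `χ` minimal on `[0, 1]` at `0`.
  let χ : ℝ → ℝ := fun t => t * c + ψ (p + t • (y - p))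
  have hχ : HasDerivAt χ (c + ℓ (y - p)) 0 := by
    have hline : HasDerivAt (fun t : ℝ => p + t • (y - p)) (y - p) 0 := by
      simpa using ((hasDerivAt_id (0 : ℝ)).smul_const (y - p)).const_add p
    have hψ' : HasFDerivAt ψ ℓ (p + (0 : ℝ) • (y - p)) := by simpa using hψ
    exact (((hasDerivAt_id (0 : ℝ)).mul_const c).add
      (hψ'.comp_hasDerivAt (0 : ℝ) hline)).congr_deriv (by simp)
  have hχmin : IsMinOn χ (Icc 0 1) 0 := by
    intro t ⟨ht0, ht1⟩
    have hconv : φ (p + t • (y - p)) ≤ φ p + t * c := by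
      have h := hφ.2 (mem_univ p) (mem_univ y) (sub_nonneg.2 ht1) ht0 (sub_add_cancel 1 t)
      rw [show (1 - t) • p + t • y = p + t • (y - p) by module, smul_eq_mul, smul_eq_mul] at h
      linarith
    have := hmin (p + t • (y - p))
    simp only [χ, mem_ofPred_eq, zero_mul, zero_smul, add_zero, zero_add]
    linarith
  have hdir : (1 : ℝ) ∈ posTangentConeAt (Icc 0 1) 0 := by
    simpa using sub_mem_posTangentConeAt_of_segment_subset (segment_eq_Icc zero_le_one).subset
  have := hχmin.localize.hasFDerivWithinAt_nonneg hχ.hasDerivWithinAt.hasFDerivWithinAt hdir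
  rw [ContinuousLinearMap.toSpanSingleton_apply, one_smul] at this
  linarith

theorem isProx_sub_of_le_add_inner {E : Type*} [NormedAddCommGroup E] [InnerProductSpace ℝ E]
    {φ : E → ℝ} {p G : E} (h : ∀ y, φ p ≤ φ y + ⟪G, y - p⟫) : IsProx φ (p - G) p := by
  intro y
  rw [sub_sub_cancel, show y - (p - G) = (y - p) + G by abel, norm_add_sq_real, real_inner_comm]
  nlinarith [h y, sq_nonneg ‖y - p‖]

section PiLp

variable {ι : Type*} [Fintype ι] {B : ι → Type*}

theorem sum_apply_update [DecidableEq ι] (d : ∀ i, B i → ℝ) (a : ∀ i, B i) (k : ι) (y : B k) :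
    ∑ i, d i (Function.update a k y i) = d k y + ∑ i ∈ univ \ {k}, d i (a i) := by
  simp only [Function.apply_update d a k y]
  exact Finset.sum_update_of_mem (mem_univ k) _ _

variable [∀ i, NormedAddCommGroup (B i)]

theorem PiLp.norm_le_norm_of_forall_norm_apply_le {u v : PiLp 2 B} (h : ∀ i, ‖u i‖ ≤ ‖v i‖) :
    ‖u‖ ≤ ‖v‖ := by
  rw [PiLp.norm_eq_of_L2, PiLp.norm_eq_of_L2]
  gcongr with i
  exact h i

theorem PiLp.norm_le_card_mul {u : PiLp 2 B} {c : ℝ} (h : ∀ i, ‖u i‖ ≤ c) :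
    ‖u‖ ≤ Fintype.card ι * c := by
  classical
  calc ‖u‖ = ‖∑ i, PiLp.single 2 i (u i)‖ := by
        congr 1; ext j; simp
    _ ≤ ∑ i, ‖u i‖ := by simpa using norm_sum_le univ fun i => PiLp.single 2 i (u i)
    _ ≤ Fintype.card ι * c := by simpa using Finset.sum_le_sum fun i (_ : i ∈ Finset.univ) => h i

variable [∀ i, InnerProductSpace ℝ (B i)]

theorem IsProx.piLp {d : ∀ i, B i → ℝ} {z p : PiLp 2 B} (h : ∀ i, IsProx (d i) (z i) (p i)) :
    IsProx (fun x : PiLp 2 B => ∑ i, d i (x i)) z p := by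
  intro y
  simp only [PiLp.norm_sq_eq_of_L2, PiLp.sub_apply, Finset.mul_sum, ← Finset.sum_add_distrib]
  exact Finset.sum_le_sum fun i _ => h i (y i)

variable [DecidableEq ι] [∀ i, CompleteSpace (B i)]

theorem HasGradientAt.hasFDerivAt_comp_update {f : PiLp 2 B → ℝ} {G a : PiLp 2 B} {k : ι}
    {y : B k} (hf : HasGradientAt f G (WithLp.toLp 2 (Function.update a k y))) :
    HasFDerivAt (fun z => f (WithLp.toLp 2 (Function.update a k z))) (innerSL ℝ (G k)) y := by
  have hu := (PiLp.continuousLinearEquiv 2 ℝ B).symm.hasFDerivAt.comp y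
    (hasFDerivAt_update (𝕜 := ℝ) a y)
  refine (hf.hasFDerivAt.comp y hu).congr_fderiv ?_
  ext v
  simp only [ContinuousLinearMap.comp_apply, ContinuousLinearMap.coe_pi',
    ContinuousLinearEquiv.coe_coe, PiLp.continuousLinearEquiv_symm_apply,
    InnerProductSpace.toDual_apply_apply, PiLp.inner_apply, coe_innerSL_apply]
  rw [Finset.sum_eq_single k (fun j _ hj => by simp [hj]) (by simp)]
  simp

theorem le_add_inner_of_forall_le_update {d : ∀ i, B i → ℝ} {f : PiLp 2 B → ℝ}
    {G a q : PiLp 2 B} {k : ι} (hd : ConvexOn ℝ univ (d k))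
    (hq : ⇑q = Function.update a k (q k)) (hf : HasGradientAt f G q)
    (hmin : ∀ y, (fun x : PiLp 2 B => ∑ i, d i (x i) + f x) q ≤
      (fun x : PiLp 2 B => ∑ i, d i (x i) + f x) (WithLp.toLp 2 (Function.update a k y)))
    (y : B k) : d k (q k) ≤ d k y + ⟪G k, y - q k⟫ := by
  have hq' : WithLp.toLp 2 (Function.update a k (q k)) = q := by rw [← hq]
  refine ConvexOn.le_add_apply_sub_of_forall_add_le hd (hq' ▸ hf).hasFDerivAt_comp_update
    (fun z => ?_) y
  have h := hmin z
  beta_reduce at h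
  rw [hq, sum_apply_update, sum_apply_update] at h
  simp only [hq']
  linarith

end PiLp

section CyclicUpdate

variable {K : ℕ} {B : Fin K → Type*}

def IsCyclicBlockUpdate (x : ℕ → PiLp 2 B) : Prop :=
  ∀ r (j : Fin K), (j : ℕ) ≠ r % K → x (r + 1) j = x r j

namespace IsCyclicBlockUpdate

variable {x : ℕ → PiLp 2 B}

theorem apply_mul_add_of_le (hx : IsCyclicBlockUpdate x) (s : ℕ) {m : ℕ} {j : Fin K}
    (hmj : m ≤ j) : x (s * K + m) j = x (s * K) j := by
  induction m with
  | zero => rfl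
  | succ m ih =>
    rw [← add_assoc, hx _ j (by rw [Nat.mul_add_mod_of_lt (by omega)]; omega), ih (by omega)]

theorem apply_mul_add_of_lt (hx : IsCyclicBlockUpdate x) (s : ℕ) {m : ℕ} (hm : m ≤ K)
    {j : Fin K} (hjm : j < m) :
    x (s * K + m) j = x (s * K + j + 1) j := by
  induction m with
  | zero => omega
  | succ m ih =>
    rcases Nat.lt_succ_iff_lt_or_eq.1 hjm with hjm | rfl
    · rw [← add_assoc, hx _ j (by rw [Nat.mul_add_mod_of_lt (by omega)]; omega),
        ih (by omega) hjm]
    · rfl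

theorem apply_succ_mul (hx : IsCyclicBlockUpdate x) (s : ℕ) (j : Fin K) :
    x ((s + 1) * K) j = x (s * K + j + 1) j := by
  rw [add_one_mul]
  exact hx.apply_mul_add_of_lt s le_rfl j.isLt

theorem norm_sub_mul_add_le [∀ k, NormedAddCommGroup (B k)]
    (hx : IsCyclicBlockUpdate x) (s : ℕ) (k : Fin K) :
    ‖x (s * K) - x (s * K + k + 1)‖ ≤ ‖x ((s + 1) * K) - x (s * K)‖ := by
  refine PiLp.norm_le_norm_of_forall_norm_apply_le fun j => ?_
  rw [PiLp.sub_apply, PiLp.sub_apply, add_assoc]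
  rcases lt_or_ge (j : ℕ) (k + 1) with hj | hj
  · rw [hx.apply_mul_add_of_lt s (by omega) hj, ← hx.apply_succ_mul, norm_sub_rev]
  · rw [hx.apply_mul_add_of_le s hj, sub_self, norm_zero]
    exact norm_nonneg _

end IsCyclicBlockUpdate

end CyclicUpdate

theorem bcd_is_aps_general {K : ℕ} (hK : 0 < K) (nb : Fin K → ℕ)
    (d : (k : Fin K) → EuclideanSpace ℝ (Fin (nb k)) → ℝ)
    (hd : ∀ k, ConvexOn ℝ univ (d k))
    (f₁ f₂ : PiLp 2 (fun k : Fin K => EuclideanSpace ℝ (Fin (nb k))) → ℝ)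
    (hf₁ : ∀ x, f₁ x = ∑ k, d k (x k))
    (g : PiLp 2 (fun k : Fin K => EuclideanSpace ℝ (Fin (nb k))) →
      PiLp 2 (fun k : Fin K => EuclideanSpace ℝ (Fin (nb k))))
    (hg : ∀ x, HasGradientAt f₂ (g x) x)
    (L : ℝ) (hL : 0 ≤ L) (hLip : ∀ x y, ‖g x - g y‖ ≤ L * ‖x - y‖)
    (F : PiLp 2 (fun k : Fin K => EuclideanSpace ℝ (Fin (nb k))) → ℝ)
    (hF : ∀ x, F x = f₁ x + f₂ x)
    (x : ℕ → PiLp 2 (fun k : Fin K => EuclideanSpace ℝ (Fin (nb k))))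
    (hBCD : ∀ r : ℕ,
      x (r + 1) = Function.update (x r) (⟨r % K, Nat.mod_lt r hK⟩ : Fin K)
        (x (r + 1) ⟨r % K, Nat.mod_lt r hK⟩) ∧
      ∀ y : EuclideanSpace ℝ (Fin (nb ⟨r % K, Nat.mod_lt r hK⟩)),
        F (x (r + 1)) ≤ F (WithLp.toLp 2 (Function.update (x r) (⟨r % K, Nat.mod_lt r hK⟩ : Fin K) y))) :
    ∀ s : ℕ, ∃ e : PiLp 2 (fun k : Fin K => EuclideanSpace ℝ (Fin (nb k))),
      IsProx f₁ (x (s * K) - g (x (s * K)) + e) (x ((s + 1) * K)) ∧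
      ‖e‖ ≤ (K : ℝ) * (L + 1) * ‖x ((s + 1) * K) - x (s * K)‖ := by
  obtain rfl : f₁ = fun x => ∑ k, d k (x k) := funext hf₁
  obtain rfl : F = _ := funext hF
  intro s
  have hstep : IsCyclicBlockUpdate x := fun r j hj =>
    (congrFun (hBCD r).1 j).trans (Function.update_of_ne (Fin.ne_of_val_ne hj) _ _)
  have hsub : ∀ (k : Fin K) (y : EuclideanSpace ℝ (Fin (nb k))), d k (x ((s + 1) * K) k) ≤
      d k y + ⟪g (x (s * K + k + 1)) k, y - x ((s + 1) * K) k⟫ := by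
    intro k y
    obtain ⟨hupd, hmin⟩ := hBCD (s * K + k)
    rw [show (⟨(s * K + k) % K, _⟩ : Fin K) = k from Fin.ext (Nat.mul_add_mod_of_lt k.isLt)]
      at hupd hmin
    rw [hstep.apply_succ_mul]
    exact le_add_inner_of_forall_le_update (hd k) hupd (hg _) hmin y
  set D := x ((s + 1) * K) - x (s * K)
  set G := WithLp.toLp 2 fun k : Fin K => g (x (s * K + k + 1)) k
  refine ⟨D + (g (x (s * K)) - G), ?_, ?_⟩
  · rw [show x (s * K) - g (x (s * K)) + (D + (g (x (s * K)) - G)) = x ((s + 1) * K) - G by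
      simp only [D]; abel]
    exact IsProx.piLp fun k => isProx_sub_of_le_add_inner (hsub k)
  · have hgrad : ‖g (x (s * K)) - G‖ ≤ K * (L * ‖D‖) := by
      simpa using PiLp.norm_le_card_mul fun k => (PiLp.norm_apply_le _ k).trans <|
        (hLip _ _).trans (mul_le_mul_of_nonneg_left (hstep.norm_sub_mul_add_le s k) hL)
    have hK1 : (1 : ℝ) ≤ K := by exact_mod_cast hK
    calc ‖D + (g (x (s * K)) - G)‖ ≤ ‖D‖ + K * (L * ‖D‖) := (norm_add_le _ _).trans (by linarith)
      _ ≤ K * (L + 1) * ‖D‖ := by nlinarith [norm_nonneg D]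

/-- The cyclic block coordinate descent method for `F = f₁ + f₂`, with `f₁` block-separable
and `f₂` smooth and block coordinate-wise strongly convex, is an approximate proximal
splitting method with unit stepsize and error constant `κ = K(L+1)`: each full cycle
`x^{sK} ↦ x^{(s+1)K}` is a prox step with an error `e^s` satisfying
`‖e^s‖ ≤ K(L+1)‖x^{(s+1)K} − x^{sK}‖`. -/
theorem bcd_is_aps {K : ℕ} (hK : 0 < K) (nb : Fin K → ℕ)
    (d : (k : Fin K) → EuclideanSpace ℝ (Fin (nb k)) → ℝ)
    (hd : ∀ k, ConvexOn ℝ univ (d k))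
    (f₁ f₂ : PiLp 2 (fun k : Fin K => EuclideanSpace ℝ (Fin (nb k))) → ℝ)
    (hf₁ : ∀ x, f₁ x = ∑ k, d k (x k))
    (hf₂ : ConvexOn ℝ univ f₂)
    (g : PiLp 2 (fun k : Fin K => EuclideanSpace ℝ (Fin (nb k))) →
      PiLp 2 (fun k : Fin K => EuclideanSpace ℝ (Fin (nb k))))
    (hg : ∀ x, HasGradientAt f₂ (g x) x)
    (L : ℝ) (hL : 0 ≤ L) (hLip : ∀ x y, ‖g x - g y‖ ≤ L * ‖x - y‖)
    (γ : ℝ) (hγ : 0 < γ)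
    (hblock : ∀ (x : PiLp 2 (fun k : Fin K => EuclideanSpace ℝ (Fin (nb k))))
      (k : Fin K) (Δ : EuclideanSpace ℝ (Fin (nb k))),
      f₂ (WithLp.toLp 2 (Function.update x k (x k + Δ))) - f₂ x - ⟪g x k, Δ⟫ ≥ γ * ‖Δ‖ ^ 2)
    (F : PiLp 2 (fun k : Fin K => EuclideanSpace ℝ (Fin (nb k))) → ℝ)
    (hF : ∀ x, F x = f₁ x + f₂ x)
    (x : ℕ → PiLp 2 (fun k : Fin K => EuclideanSpace ℝ (Fin (nb k))))
    (hBCD : ∀ r : ℕ,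
      x (r + 1) = Function.update (x r) (⟨r % K, Nat.mod_lt r hK⟩ : Fin K)
        (x (r + 1) ⟨r % K, Nat.mod_lt r hK⟩) ∧
      ∀ y : EuclideanSpace ℝ (Fin (nb ⟨r % K, Nat.mod_lt r hK⟩)),
        F (x (r + 1)) ≤ F (WithLp.toLp 2 (Function.update (x r) (⟨r % K, Nat.mod_lt r hK⟩ : Fin K) y))) :
    ∀ s : ℕ, ∃ e : PiLp 2 (fun k : Fin K => EuclideanSpace ℝ (Fin (nb k))),
      IsProx f₁ (x (s * K) - g (x (s * K)) + e) (x ((s + 1) * K)) ∧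
      ‖e‖ ≤ (K : ℝ) * (L + 1) * ‖x ((s + 1) * K) - x (s * K)‖ :=
  bcd_is_aps_general hK nb d hd f₁ f₂ hf₁ g hg L hL hLip F hF x hBCD
end
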